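/- arXiv:2008.01851 — 9 statements merged into one kernel-verified Lean document; each statement's English description precedes it below -/
import Mathlib

section
/- If $u:(0,\infty)\to\mathbb{R}$ is twice differentiable with $\lim_{x\to\infty} x^2 u''(x) = \gamma \in \mathbb{R}$, and $c = \lim_{x\to\infty} u'(x)$, then the function $v(x) := u(x) - c x + \gamma \ln x$ satisfies $\lim_{x\to\infty} x\, v'(x) = 0$. -/
open Filter Set

private lemma aux_mono (u : ℝ → ℝ) (c a X : ℝ) (hX : (1:ℝ) ≤ X)
    (hd : ∀ x ∈ Set.Ioi (0:ℝ), DifferentiableAt ℝ (deriv u) x)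
    (hbound : ∀ t ≥ X, a ≤ t ^ 2 * deriv (deriv u) t)
    (hc : Tendsto (deriv u) atTop (nhds c)) :
    ∀ x ≥ X, deriv u x + a * x⁻¹ ≤ c := by
  set g : ℝ → ℝ := fun t => deriv u t + a * t⁻¹ with hg
  have key : ∀ t : ℝ, 0 < t →
      HasDerivAt g (deriv (deriv u) t + a * (-(t ^ 2)⁻¹)) t := by
    intro t ht
    exact ((hd t ht).hasDerivAt).add ((hasDerivAt_inv ht.ne').const_mul a)
  have hmono : MonotoneOn g (Set.Ici X) := by
    apply monotoneOn_of_deriv_nonneg (convex_Ici X)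
    · intro t ht
      have ht0 : (0:ℝ) < t := lt_of_lt_of_le (by linarith) ht
      exact (key t ht0).differentiableAt.continuousAt.continuousWithinAt
    · intro t ht
      rw [interior_Ici] at ht
      have ht0 : (0:ℝ) < t := lt_of_lt_of_le (by linarith) ht.le
      exact (key t ht0).differentiableAt.differentiableWithinAt
    · intro t ht
      rw [interior_Ici] at ht
      have ht0 : (0:ℝ) < t := lt_of_lt_of_le (by linarith) ht.le
      rw [(key t ht0).deriv]
      have h1 : t ^ 2 * (t ^ 2)⁻¹ = 1 := mul_inv_cancel₀ (by positivity)
      have h2 := mul_le_mul_of_nonneg_right (hbound t ht.le)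
        (inv_nonneg.2 (sq_nonneg t))
      have h3 : t ^ 2 * deriv (deriv u) t * (t ^ 2)⁻¹ = deriv (deriv u) t := by
        field_simp
      rw [h3] at h2
      nlinarith [h2, h1]
  have hgl : Tendsto g atTop (nhds c) := by
    have := hc.add ((tendsto_inv_atTop_zero).const_mul a)
    simpa using this
  intro x hx
  refine ge_of_tendsto hgl ?_
  filter_upwards [eventually_ge_atTop x] with y hy
  exact hmono (mem_Ici.2 hx) (mem_Ici.2 (hx.trans hy)) hy

/-- If `u` is twice differentiable on `(0,∞)` with `x^2 u''(x) → γ ∈ ℝ`, and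
`c = lim_{x→∞} u'(x)`, then `v(x) := u(x) - c x + γ ln x` satisfies `x v'(x) → 0`. -/
theorem x_mul_deriv_v_tendsto_zero
    (u : ℝ → ℝ) (γ c : ℝ)
    (hdiff : ∀ x ∈ Set.Ioi (0:ℝ),
      DifferentiableAt ℝ u x ∧ DifferentiableAt ℝ (deriv u) x)
    (hlim : Tendsto (fun x => x ^ 2 * deriv (deriv u) x) atTop (nhds γ))
    (hc : Tendsto (deriv u) atTop (nhds c)) :
    Tendsto (fun x => x * deriv (fun y => u y - c * y + γ * Real.log y) x)
      atTop (nhds 0) := by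
  have hv : ∀ᶠ x in atTop,
      x * deriv (fun y => u y - c * y + γ * Real.log y) x
        = x * (deriv u x - c) + γ := by
    filter_upwards [eventually_gt_atTop (0:ℝ)] with x hx
    have hder : HasDerivAt (fun y => u y - c * y + γ * Real.log y)
        (deriv u x - c * 1 + γ * x⁻¹) x :=
      (((hdiff x hx).1.hasDerivAt).sub ((hasDerivAt_id x).const_mul c)).add
        ((Real.hasDerivAt_log hx.ne').const_mul γ)
    rw [hder.deriv]
    field_simp
  have hmain : Tendsto (fun x => x * (deriv u x - c)) atTop (nhds (-γ)) := by
    rw [Metric.tendsto_atTop]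
    intro ε hε
    obtain ⟨X₀, hX₀⟩ := Metric.tendsto_atTop.1 hlim (ε / 2) (by positivity)
    refine ⟨max X₀ 1, fun x hx => ?_⟩
    set X := max X₀ 1 with hXdef
    have hX1 : (1:ℝ) ≤ X := le_max_right _ _
    have habs : ∀ t ≥ X, |t ^ 2 * deriv (deriv u) t - γ| < ε / 2 := by
      intro t ht
      have := hX₀ t ((le_max_left _ _).trans ht)
      rwa [Real.dist_eq] at this
    -- lower bound on second deriv
    have hlow : ∀ x ≥ X, deriv u x + (γ - ε / 2) * x⁻¹ ≤ c := by
      refine aux_mono u c (γ - ε / 2) X hX1 (fun y hy => (hdiff y hy).2) ?_ hc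
      intro t ht
      have := (abs_lt.1 (habs t ht)).1
      linarith
    -- upper bound via -u
    have hnegderiv : deriv (fun y => -u y) = fun y => -deriv u y := by
      funext y; exact deriv.neg
    have hhigh : ∀ x ≥ X, deriv u x + (γ + ε / 2) * x⁻¹ ≥ c := by
      have := aux_mono (fun y => -u y) (-c) (-(γ + ε / 2)) X hX1
        (by intro y hy; rw [hnegderiv]; exact (hdiff y hy).2.neg)
        (by
          intro t ht
          rw [hnegderiv]
          have hd2 : deriv (fun y => -deriv u y) t = -deriv (deriv u) t :=
            deriv.neg
          rw [hd2]
          have := (abs_lt.1 (habs t ht)).2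
          nlinarith)
        (by rw [hnegderiv]; exact hc.neg)
      intro x hx
      have h := this x hx
      rw [hnegderiv] at h
      nlinarith [h]
    have hx0 : (0:ℝ) < x := lt_of_lt_of_le one_pos (hX1.trans hx)
    have hxinv : x * x⁻¹ = 1 := mul_inv_cancel₀ hx0.ne'
    have h1 := hlow x hx
    have h2 := hhigh x hx
    have h1' : x * deriv u x + (γ - ε / 2) ≤ x * c := by
      have h := mul_le_mul_of_nonneg_left h1 hx0.le
      have e : x * (deriv u x + (γ - ε / 2) * x⁻¹)
          = x * deriv u x + (γ - ε / 2) := by field_simp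
      rw [e] at h; exact h
    have h2' : x * c ≤ x * deriv u x + (γ + ε / 2) := by
      have h := mul_le_mul_of_nonneg_left h2 hx0.le
      have e : x * (deriv u x + (γ + ε / 2) * x⁻¹)
          = x * deriv u x + (γ + ε / 2) := by field_simp
      rw [e] at h; exact h
    rw [Real.dist_eq, abs_lt]
    constructor
    · nlinarith
    · nlinarith
  have : Tendsto (fun x => x * (deriv u x - c) + γ) atTop (nhds 0) := by
    have := hmain.add (tendsto_const_nhds (x := γ))
    simpa using this
  exact Tendsto.congr' (Filter.EventuallyEq.symm hv) this
end

section
/- If $u:(0,\infty)\to\mathbb{R}$ is twice differentiable, $\lim_{x\to\infty} x^2 u''(x) = +\infty$, and $\mu_* := -\lim_{x\to\infty} u'(x)$ is a real number, then $\lim_{x\to\infty} (u(x) + \mu_* x) = -\infty$; in fact $(u(x)+\mu_* x)/\ln x \to -\infty$. -/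
open Filter Set

lemma aux_bound (u : ℝ → ℝ) (μstar : ℝ)
    (hdiff : ∀ x ∈ Set.Ioi (0:ℝ),
      DifferentiableAt ℝ u x ∧ DifferentiableAt ℝ (deriv u) x)
    (hlim : Tendsto (fun x => x ^ 2 * deriv (deriv u) x) atTop atTop)
    (hmu : Tendsto (deriv u) atTop (nhds (-μstar)))
    (M : ℝ) (hM : 0 < M) :
    ∃ A C : ℝ, 0 < A ∧ ∀ x, A ≤ x → u x + μstar * x ≤ C - M * Real.log x := by
  obtain ⟨A₀, hA₀⟩ := (hlim.eventually_ge_atTop M).exists_forall_of_atTop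
  set A : ℝ := max A₀ 1 with hAdef
  have hApos : (0:ℝ) < A := lt_of_lt_of_le one_pos (le_max_right _ _)
  have hA : ∀ x, A ≤ x → M ≤ x ^ 2 * deriv (deriv u) x := fun x hx =>
    hA₀ x (le_trans (le_max_left _ _) hx)
  have hpos : ∀ x, A ≤ x → (0:ℝ) < x := fun x hx => lt_of_lt_of_le hApos hx
  -- the function g
  set g : ℝ → ℝ := fun t => deriv u t + M * t⁻¹ with hg
  have hgderiv : ∀ x, A ≤ x →
      HasDerivAt g (deriv (deriv u) x + M * (-(x ^ 2)⁻¹)) x := by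
    intro x hx
    have hx0 : (0:ℝ) < x := hpos x hx
    exact ((hdiff x (mem_Ioi.2 hx0)).2.hasDerivAt).add
      ((hasDerivAt_inv hx0.ne').const_mul M)
  have hgmono : MonotoneOn g (Ici A) := by
    apply monotoneOn_of_deriv_nonneg (convex_Ici A)
    · intro x hx
      exact ((hgderiv x hx).differentiableAt).continuousAt.continuousWithinAt
    · intro x hx
      rw [interior_Ici] at hx
      exact ((hgderiv x (le_of_lt hx)).differentiableAt).differentiableWithinAt
    · intro x hx
      rw [interior_Ici] at hx
      have hx' : A ≤ x := le_of_lt hx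
      rw [(hgderiv x hx').deriv]
      have hx0 : (0:ℝ) < x := hpos x hx'
      have h2 : (0:ℝ) < x ^ 2 := by positivity
      have h3 : M ≤ x ^ 2 * deriv (deriv u) x := hA x hx'
      have h4 : M * (x ^ 2)⁻¹ ≤ deriv (deriv u) x := by
        rw [mul_inv_le_iff₀ h2]
        linarith [h3]
      have : M * (x ^ 2)⁻¹ = -(M * (-(x ^ 2)⁻¹)) := by ring
      linarith [h4, this ▸ h4]
  have hgtend : Tendsto g atTop (nhds (-μstar)) := by
    have h1 : Tendsto (fun t : ℝ => M * t⁻¹) atTop (nhds (M * 0)) :=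
      tendsto_inv_atTop_zero.const_mul M
    have := hmu.add h1
    simpa using this
  have hgle : ∀ x, A ≤ x → g x ≤ -μstar := by
    intro x hx
    refine ge_of_tendsto hgtend ?_
    filter_upwards [eventually_ge_atTop x] with y hy
    exact hgmono (mem_Ici.2 hx) (mem_Ici.2 (le_trans hx hy)) hy
  -- the function h
  set h : ℝ → ℝ := fun t => u t + μstar * t + M * Real.log t with hh
  have hhderiv : ∀ x, A ≤ x →
      HasDerivAt h (deriv u x + μstar * 1 + M * x⁻¹) x := by
    intro x hx
    have hx0 : (0:ℝ) < x := hpos x hx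
    exact (((hdiff x (mem_Ioi.2 hx0)).1.hasDerivAt).add
      ((hasDerivAt_id x).const_mul μstar)).add
      ((Real.hasDerivAt_log hx0.ne').const_mul M)
  have hhanti : AntitoneOn h (Ici A) := by
    apply antitoneOn_of_deriv_nonpos (convex_Ici A)
    · intro x hx
      exact ((hhderiv x hx).differentiableAt).continuousAt.continuousWithinAt
    · intro x hx
      rw [interior_Ici] at hx
      exact ((hhderiv x (le_of_lt hx)).differentiableAt).differentiableWithinAt
    · intro x hx
      rw [interior_Ici] at hx
      have hx' : A ≤ x := le_of_lt hx
      rw [(hhderiv x hx').deriv]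
      have := hgle x hx'
      simp only [hg] at this
      linarith
  refine ⟨A, u A + μstar * A + M * Real.log A, hApos, fun x hx => ?_⟩
  have := hhanti (mem_Ici.2 le_rfl) (mem_Ici.2 hx) hx
  simp only [hh] at this
  linarith

/-- If `u` is twice differentiable on `(0,∞)`, `x^2 u''(x) → +∞`, and
`u'(x) → -μ⋆` with `μ⋆ ∈ ℝ`, then `u(x) + μ⋆ x → -∞`; in fact
`(u(x) + μ⋆ x)/ln x → -∞`. -/
theorem u_plus_mustar_x_tendsto_bot
    (u : ℝ → ℝ) (μstar : ℝ)
    (hdiff : ∀ x ∈ Set.Ioi (0:ℝ),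
      DifferentiableAt ℝ u x ∧ DifferentiableAt ℝ (deriv u) x)
    (hlim : Tendsto (fun x => x ^ 2 * deriv (deriv u) x) atTop atTop)
    (hmu : Tendsto (deriv u) atTop (nhds (-μstar))) :
    Tendsto (fun x => u x + μstar * x) atTop atBot ∧
    Tendsto (fun x => (u x + μstar * x) / Real.log x) atTop atBot := by
  constructor
  · obtain ⟨A, C, hApos, hbound⟩ := aux_bound u μstar hdiff hlim hmu 1 one_pos
    refine tendsto_atBot.2 fun b => ?_
    filter_upwards [eventually_ge_atTop A,
      Real.tendsto_log_atTop.eventually_ge_atTop (C - b)] with x h1 h2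
    have := hbound x h1
    linarith
  · refine tendsto_atBot.2 fun b => ?_
    set M : ℝ := max 1 (1 - b) with hMdef
    have hM : (0:ℝ) < M := lt_of_lt_of_le one_pos (le_max_left _ _)
    obtain ⟨A, C, hApos, hbound⟩ := aux_bound u μstar hdiff hlim hmu M hM
    filter_upwards [eventually_ge_atTop A,
      Real.tendsto_log_atTop.eventually_ge_atTop (max 1 |C|)] with x h1 h2
    have hlog1 : (1:ℝ) ≤ Real.log x := le_trans (le_max_left _ _) h2
    have hlogC : |C| ≤ Real.log x := le_trans (le_max_right _ _) h2
    have hlogpos : (0:ℝ) < Real.log x := lt_of_lt_of_le one_pos hlog1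
    have hb := hbound x h1
    have h3 : (u x + μstar * x) / Real.log x ≤ (C - M * Real.log x) / Real.log x := by
      gcongr
    have h4 : (C - M * Real.log x) / Real.log x = C / Real.log x - M := by
      field_simp
    have h5 : C / Real.log x ≤ 1 := by
      rw [div_le_one hlogpos]
      calc C ≤ |C| := le_abs_self C
        _ ≤ Real.log x := hlogC
    have h6 : 1 - b ≤ M := le_max_right _ _
    calc (u x + μstar * x) / Real.log x ≤ C / Real.log x - M := by rw [← h4]; exact h3
      _ ≤ 1 - M := by linarith
      _ ≤ b := by linarith
end

section
/- If $u:(0,\infty)\to\mathbb{R}$ is twice differentiable, $\lim_{x\to\infty} x^2 u''(x) = +\infty$, and $\mu_* := -\lim_{x\to\infty} u'(x) \in \mathbb{R}$, then the series $S_\mu := \sum_{k=1}^\infty e^{-\mu k - u(k)}$ satisfies $\lim_{\mu \downarrow \mu_*} S_\mu = \infty$; in particular $S_{\mu_*} = \infty$. -/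
/-! Write the terms as `exp (h_μ k)` with `h_μ x = -μ x - u x`, so `h_μ' = -μ - u'`. Since
`x² u'' → ∞`, `u` is eventually convex and `u'` increases to its limit `-μ⋆`; hence `h_μ⋆` is
eventually nondecreasing, the terms of `S_μ⋆` stay away from `0`, and `S_μ⋆` diverges. For `μ > μ⋆`,
`h_μ' → μ⋆ - μ < 0`, so `h_μ` eventually lies below a line of negative slope and `S_μ` converges.
Finally `S_μ` dominates each of its partial sums, which are continuous in `μ` and, at `μ⋆`,
unbounded. -/

open Filter Set Topology

section EventualMonotonicity

variable {f f' : ℝ → ℝ}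

theorem exists_monotoneOn_Ici_of_hasDerivAt_nonneg
    (hf : ∀ᶠ x in atTop, HasDerivAt f (f' x) x) (hf' : ∀ᶠ x in atTop, 0 ≤ f' x) :
    ∃ X, MonotoneOn f (Ici X) := by
  obtain ⟨X, hX⟩ := eventually_atTop.mp (hf.and hf')
  refine ⟨X, monotoneOn_of_hasDerivWithinAt_nonneg (f' := f') (convex_Ici X)
    (fun x hx => (hX x hx).1.continuousAt.continuousWithinAt) (fun x hx => ?_) fun x hx => ?_⟩
  · rw [interior_Ici] at hx
    exact (hX x hx.le).1.hasDerivWithinAt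
  · rw [interior_Ici] at hx
    exact (hX x hx.le).2

theorem eventually_le_of_tendsto_of_hasDerivAt_nonneg {L : ℝ}
    (hf : ∀ᶠ x in atTop, HasDerivAt f (f' x) x) (hf' : ∀ᶠ x in atTop, 0 ≤ f' x)
    (hL : Tendsto f atTop (𝓝 L)) : ∀ᶠ x in atTop, f x ≤ L := by
  obtain ⟨X, hmono⟩ := exists_monotoneOn_Ici_of_hasDerivAt_nonneg hf hf'
  filter_upwards [eventually_ge_atTop X] with x hx
  exact ge_of_tendsto hL <| (eventually_ge_atTop x).mono fun y hy =>
    hmono hx (hx.trans hy) hy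

end EventualMonotonicity

section ExponentialSeries

open Real

variable {g g' : ℝ → ℝ}

theorem summable_exp_of_hasDerivAt_of_tendsto_neg {ℓ : ℝ}
    (hg : ∀ᶠ x in atTop, HasDerivAt g (g' x) x) (hg' : Tendsto g' atTop (𝓝 ℓ)) (hℓ : ℓ < 0) :
    Summable fun k : ℕ => exp (g k) := by
  obtain ⟨c, hℓc, hc⟩ := exists_between hℓ
  obtain ⟨X, hmono⟩ := exists_monotoneOn_Ici_of_hasDerivAt_nonneg
    (f := fun x => c * x - g x) (f' := fun x => c - g' x)
    (hg.mono fun x hx => (((hasDerivAt_id' x).const_mul c).sub hx).congr_deriv (by ring))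
    ((hg'.eventually (eventually_lt_nhds hℓc)).mono fun x hx => by linarith)
  refine ((summable_exp_nat_mul_iff.mpr hc).mul_left (exp (g X - c * X)))
    |>.of_norm_bounded_eventually_nat ?_
  filter_upwards [tendsto_natCast_atTop_atTop.eventually_ge_atTop X] with k hk
  rw [norm_of_nonneg (exp_pos _).le, ← exp_add]
  have := hmono self_mem_Ici hk hk
  exact exp_le_exp.mpr (by linarith)

theorem not_summable_exp_of_hasDerivAt_nonneg
    (hg : ∀ᶠ x in atTop, HasDerivAt g (g' x) x) (hg' : ∀ᶠ x in atTop, 0 ≤ g' x) :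
    ¬ Summable fun k : ℕ => exp (g k) := by
  intro hsum
  obtain ⟨X, hmono⟩ := exists_monotoneOn_Ici_of_hasDerivAt_nonneg hg hg'
  have hbound : ∀ᶠ k : ℕ in atTop, exp (g X) ≤ exp (g k) :=
    (tendsto_natCast_atTop_atTop.eventually_ge_atTop X).mono fun k hk =>
      exp_le_exp.mpr (hmono self_mem_Ici hk hk)
  exact (exp_pos (g X)).not_ge (ge_of_tendsto hsum.tendsto_atTop_zero hbound)

end ExponentialSeries

theorem tendsto_tsum_atTop_of_not_summable {α : Type*} [TopologicalSpace α] {F : α → ℕ → ℝ}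
    {a : α} {l : Filter α} (hl : l ≤ 𝓝 a) (hcont : ∀ k, ContinuousAt (fun x => F x k) a)
    (hnonneg : ∀ x k, 0 ≤ F x k) (hsum : ∀ᶠ x in l, Summable (F x)) (hdiv : ¬ Summable (F a)) :
    Tendsto (fun x => ∑' k, F x k) l atTop := by
  refine tendsto_atTop.mpr fun M => ?_
  obtain ⟨n, hn⟩ := ((not_summable_iff_tendsto_nat_atTop_of_nonneg (hnonneg a)).mp hdiv
    |>.eventually_gt_atTop M).exists
  have hpartial : ∀ᶠ x in l, M < ∑ k ∈ Finset.range n, F x k :=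
    hl <| (tendsto_finsetSum _ fun k _ => hcont k).eventually (eventually_gt_nhds hn)
  filter_upwards [hpartial, hsum] with x hx hx'
  exact hx.le.trans (hx'.sum_le_tsum _ fun k _ => hnonneg x k)

/-- If `u` is twice differentiable on `(0,∞)`, `x^2 u''(x) → +∞`, and
`u'(x) → -μ⋆` with `μ⋆ ∈ ℝ`, then `S_μ = ∑_{k≥1} e^{-μ k - u(k)}` tends to `∞`
as `μ ↓ μ⋆`; in particular the series diverges at `μ = μ⋆`. -/
theorem S_mu_tendsto_atTop
    (u : ℝ → ℝ) (μstar : ℝ)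
    (hdiff : ∀ x ∈ Set.Ioi (0:ℝ),
      DifferentiableAt ℝ u x ∧ DifferentiableAt ℝ (deriv u) x)
    (hlim : Tendsto (fun x => x ^ 2 * deriv (deriv u) x) atTop atTop)
    (hmu : Tendsto (deriv u) atTop (nhds (-μstar))) :
    Tendsto
      (fun μ : ℝ => ∑' k : ℕ, Real.exp (-(μ * ((k : ℝ) + 1)) - u ((k : ℝ) + 1)))
      (nhdsWithin μstar (Set.Ioi μstar)) atTop ∧
    ¬ Summable (fun k : ℕ => Real.exp (-(μstar * ((k : ℝ) + 1)) - u ((k : ℝ) + 1))) := by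
  have hu : ∀ᶠ x in atTop,
      HasDerivAt u (deriv u x) x ∧ HasDerivAt (deriv u) (deriv (deriv u) x) x :=
    (eventually_gt_atTop 0).mono fun x hx => ⟨(hdiff x hx).1.hasDerivAt, (hdiff x hx).2.hasDerivAt⟩
  have hexponent : ∀ μ : ℝ, ∀ᶠ x in atTop,
      HasDerivAt (fun x => -(μ * x) - u x) (-μ - deriv u x) x := fun μ =>
    hu.mono fun x hx => (((hasDerivAt_id' x).const_mul μ).neg.sub hx.1).congr_deriv (by ring)
  have hconvex : ∀ᶠ x in atTop, 0 ≤ deriv (deriv u) x :=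
    (hlim.eventually_gt_atTop 0).mono fun x hx => (pos_of_mul_pos_right hx (sq_nonneg x)).le
  have hu'_le : ∀ᶠ x in atTop, deriv u x ≤ -μstar :=
    eventually_le_of_tendsto_of_hasDerivAt_nonneg (hu.mono fun _ hx => hx.2) hconvex hmu
  have hshift : ∀ μ : ℝ, Summable (fun k : ℕ => Real.exp (-(μ * ((k : ℝ) + 1)) - u ((k : ℝ) + 1)))
      ↔ Summable (fun k : ℕ => Real.exp (-(μ * k) - u k)) := fun μ => by
    simpa only [Nat.cast_add, Nat.cast_one] using
      summable_nat_add_iff (f := fun k : ℕ => Real.exp (-(μ * k) - u k)) 1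
  have hdiv : ¬ Summable (fun k : ℕ => Real.exp (-(μstar * ((k : ℝ) + 1)) - u ((k : ℝ) + 1))) :=
    (hshift μstar).not.mpr <| not_summable_exp_of_hasDerivAt_nonneg
      (g := fun x => -(μstar * x) - u x) (hexponent μstar) (hu'_le.mono fun _ hx => by linarith)
  refine ⟨tendsto_tsum_atTop_of_not_summable
    (F := fun μ (k : ℕ) => Real.exp (-(μ * ((k : ℝ) + 1)) - u ((k : ℝ) + 1))) nhdsWithin_le_nhds
    (fun _ => by fun_prop) (fun _ _ => (Real.exp_pos _).le) ?_ hdiv, hdiv⟩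
  filter_upwards [self_mem_nhdsWithin] with μ hμ
  exact (hshift μ).mpr <| summable_exp_of_hasDerivAt_of_tendsto_neg
    (g := fun x => -(μ * x) - u x) (hexponent μ) (tendsto_const_nhds.sub hmu)
    (by linarith [mem_Ioi.mp hμ])
end

section
/- Let $d \ge 0$ and let $v:(0,\infty)\to\mathbb{R}$ be differentiable with $x v'(x) \to 0$ as $x\to\infty$. Then for each $x > 0$, $\lim_{\mu \downarrow 0}\; \mu^{d}\, e^{v(1/\mu)} \sum_{k \ge x/\mu} k^{d-1} e^{-\mu k - v(k)} = \Gamma(x; d) := \int_x^\infty y^{d-1} e^{-y}\, dy$. -/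
/-!
Put `u = μ k`. The `k`-th term of the sum is `μ` times `u^(d-1) e^(-u) e^(v(1/μ) - v(k))`
(for `u ≥ x`), so the whole expression is the integral over `[0, ∞)` of the step function taking
this value on `[μ k, μ (k + 1))`. As `log (1/μ) - log k = -log u`, the hypothesis `y v'(y) → 0`
gives `|v(1/μ) - v(k)| ≤ ε |log u|` for small `μ`. This yields pointwise convergence of the step
functions to `y^(d-1) e^(-y)` on `(x, ∞)`, and, taking `ε = 1` and using `e^|log u| ≤ u + 1/u`,
an integrable majorant `C (y^(d+1) + y^d / x) e^(-y)`. Dominated convergence concludes.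
-/

open Filter Set MeasureTheory Real Topology Asymptotics

theorem exists_abs_sub_le_mul_abs_log_sub_log {v : ℝ → ℝ}
    (hdiff : ∀ᶠ y in atTop, DifferentiableAt ℝ v y)
    (hv : Tendsto (fun y => y * deriv v y) atTop (𝓝 0)) {ε : ℝ} (hε : 0 < ε) :
    ∃ T > 0, ∀ a b, T ≤ a → T ≤ b → |v a - v b| ≤ ε * |log a - log b| := by
  -- In the variable `t = log y`, the derivative of `v ∘ exp` is `y v'(y)`.
  obtain ⟨t₀, ht₀⟩ := eventually_atTop.mp <| tendsto_exp_atTop.eventually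
    (hdiff.and (hv.eventually (Metric.closedBall_mem_nhds 0 hε)))
  refine ⟨exp t₀, exp_pos t₀, fun a b ha hb => ?_⟩
  have ha0 := (exp_pos t₀).trans_le ha
  have hb0 := (exp_pos t₀).trans_le hb
  have hderiv : ∀ t ∈ Ici t₀,
      HasDerivWithinAt (v ∘ exp) (exp t * deriv v (exp t)) (Ici t₀) t := fun t ht => by
    simpa [mul_comm] using ((ht₀ t ht).1.hasDerivAt.comp t (hasDerivAt_exp t)).hasDerivWithinAt
  have hmvt := (convex_Ici t₀).norm_image_sub_le_of_norm_hasDerivWithin_le hderiv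
    (fun t ht => mem_closedBall_zero_iff.1 (ht₀ t ht).2)
    ((le_log_iff_exp_le hb0).2 hb) ((le_log_iff_exp_le ha0).2 ha)
  simpa [exp_log ha0, exp_log hb0] using hmvt

theorem eventually_abs_sub_le_mul_abs_log_mul {v : ℝ → ℝ}
    (hdiff : ∀ᶠ y in atTop, DifferentiableAt ℝ v y)
    (hv : Tendsto (fun y => y * deriv v y) atTop (𝓝 0)) {x : ℝ} (hx : 0 < x)
    {ε : ℝ} (hε : 0 < ε) :
    ∀ᶠ μ in 𝓝[>] 0, ∀ k : ℝ, x ≤ μ * k → |v (1 / μ) - v k| ≤ ε * |log (μ * k)| := by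
  obtain ⟨T, hT, hvT⟩ := exists_abs_sub_le_mul_abs_log_sub_log hdiff hv hε
  have hT₁ : ∀ᶠ μ in 𝓝[>] (0 : ℝ), T ≤ 1 / μ := by
    simpa using tendsto_inv_nhdsGT_zero.eventually_ge_atTop T
  have hT₂ : ∀ᶠ μ in 𝓝[>] (0 : ℝ), T ≤ x / μ := by
    simpa [div_eq_mul_inv] using
      (tendsto_inv_nhdsGT_zero.const_mul_atTop hx).eventually_ge_atTop T
  filter_upwards [self_mem_nhdsWithin, hT₁, hT₂] with μ (hμ : 0 < μ) hT₁ hT₂ k hk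
  have hTk : T ≤ k := hT₂.trans ((div_le_iff₀' hμ).2 hk)
  calc |v (1 / μ) - v k| ≤ ε * |log (1 / μ) - log k| := hvT _ _ hT₁ hTk
    _ = ε * |log (μ * k)| := by
      rw [one_div, log_inv, log_mul hμ.ne' (hT.trans_le hTk).ne', ← abs_neg]; ring_nf

theorem mul_natFloor_div_le {μ y : ℝ} (hμ : 0 < μ) (hy : 0 ≤ y) : μ * ⌊y / μ⌋₊ ≤ y :=
  (le_div_iff₀' hμ).1 (Nat.floor_le (div_nonneg hy hμ.le))

theorem lt_mul_natFloor_div_add {μ : ℝ} (hμ : 0 < μ) (y : ℝ) : y < μ * ⌊y / μ⌋₊ + μ := by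
  simpa [mul_add] using (div_lt_iff₀' hμ).1 (Nat.lt_floor_add_one (y / μ))

theorem tendsto_mul_natFloor_div {y : ℝ} (hy : 0 ≤ y) :
    Tendsto (fun μ : ℝ => μ * ⌊y / μ⌋₊) (𝓝[>] 0) (𝓝 y) := by
  have hlow : Tendsto (fun μ : ℝ => y - μ) (𝓝[>] 0) (𝓝 y) := by
    simpa using (tendsto_const_nhds.sub tendsto_id).mono_left (nhdsWithin_le_nhds (a := (0 : ℝ)))
  refine tendsto_of_tendsto_of_tendsto_of_le_of_le' hlow tendsto_const_nhds ?_ ?_ <;>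
    filter_upwards [self_mem_nhdsWithin] with μ (hμ : 0 < μ)
  · linarith [lt_mul_natFloor_div_add hμ y]
  · exact mul_natFloor_div_le hμ hy

theorem integral_Ici_natFloor_div (g : ℕ → ℝ) {μ : ℝ} (hμ : 0 < μ)
    (hg : IntegrableOn (fun y => g ⌊y / μ⌋₊) (Ici 0)) :
    ∫ y in Ici 0, g ⌊y / μ⌋₊ = μ * ∑' k, g k := by
  have hmono : Monotone fun n : ℕ => μ * n := fun _ _ h =>
    mul_le_mul_of_nonneg_left (Nat.cast_le.2 h) hμ.le
  have hcover : ⋃ n : ℕ, Ico (μ * n) (μ * ↑(n + 1)) = Ici 0 := by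
    simpa using iUnion_Ico_map_succ_eq_Ici (fun n => hmono bot_le)
      (not_bddAbove_of_tendsto_atTop (tendsto_natCast_atTop_atTop.const_mul_atTop hμ))
  have hfloor : ∀ k : ℕ, ∀ y ∈ Ico (μ * k) (μ * ↑(k + 1)), g ⌊y / μ⌋₊ = g k := by
    rintro k y ⟨hky, hyk⟩
    rw [Nat.floor_eq_on_Ico k (y / μ)
      ⟨(le_div_iff₀' hμ).2 hky, (div_lt_iff₀' hμ).2 (by simpa using hyk)⟩]
  have hdisj : Pairwise (Function.onFun Disjoint fun n : ℕ => Ico (μ * n) (μ * ↑(n + 1))) :=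
    hmono.pairwise_disjoint_on_Ico_succ
  rw [← hcover, integral_iUnion (fun _ => measurableSet_Ico) hdisj (hcover ▸ hg), ← tsum_mul_left]
  congr 1 with k
  rw [setIntegral_congr_fun measurableSet_Ico (hfloor k), setIntegral_const, volume_real_Ico,
    smul_eq_mul]
  push_cast
  rw [show μ * (k + 1) - μ * k = μ by ring, max_eq_left hμ.le]

theorem exp_abs_log_le_add_inv {u : ℝ} (hu : 0 < u) : exp |log u| ≤ u + u⁻¹ := by
  rcases abs_choice (log u) with h | h <;> rw [h]
  · rw [exp_log hu]; linarith [inv_pos.2 hu]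
  · rw [exp_neg, exp_log hu]; linarith

theorem rpow_sub_one_mul_exp_neg_mul_exp_le {d x u y c : ℝ} (hd : 0 ≤ d) (hx : 0 < x)
    (hxu : x ≤ u) (huy : u ≤ y) (hyu : y ≤ u + 1) (hc : c ≤ |log u|) :
    u ^ (d - 1) * exp (-u) * exp c ≤ exp 1 / x * (y ^ (d + 1) + x⁻¹ * y ^ d) * exp (-y) := by
  have hu : 0 < u := hx.trans_le hxu
  have hy : 0 < y := hu.trans_le huy
  have hpow : u ^ (d - 1) ≤ y ^ d / x := by
    rw [rpow_sub_one hu.ne']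
    exact div_le_div₀ (by positivity) (rpow_le_rpow hu.le huy hd) hx hxu
  have hexp : exp (-u) ≤ exp 1 * exp (-y) := by
    rw [← exp_add]; exact exp_le_exp.2 (by linarith)
  have hlog : exp c ≤ y + x⁻¹ := calc
    exp c ≤ exp |log u| := exp_le_exp.2 hc
    _ ≤ u + u⁻¹ := exp_abs_log_le_add_inv hu
    _ ≤ y + x⁻¹ := add_le_add huy (inv_anti₀ hx hxu)
  calc u ^ (d - 1) * exp (-u) * exp c ≤ y ^ d / x * (exp 1 * exp (-y)) * (y + x⁻¹) :=
        mul_le_mul (mul_le_mul hpow hexp (by positivity) (by positivity)) hlog (by positivity)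
          (by positivity)
    _ = _ := by rw [rpow_add_one hy.ne']; ring

theorem integrableOn_Ici_rpow_mul_exp_neg {s : ℝ} (hs : -1 < s) :
    IntegrableOn (fun y => y ^ s * exp (-y)) (Ici 0) :=
  (integrableOn_Ici_iff_integrableOn_Ioi (by simp)).2 <| by
    simpa using integrableOn_rpow_mul_exp_neg_rpow hs one_pos

theorem integrableOn_Ici_majorant {d x : ℝ} (hd : -1 < d) :
    IntegrableOn (fun y => exp 1 / x * (y ^ (d + 1) + x⁻¹ * y ^ d) * exp (-y)) (Ici 0) := by
  refine IntegrableOn.congr_fun (f := fun y => exp 1 / x * (y ^ (d + 1) * exp (-y)) +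
    exp 1 / x * (x⁻¹ * (y ^ d * exp (-y)))) ?_ (fun y _ => by ring) measurableSet_Ici
  exact ((integrableOn_Ici_rpow_mul_exp_neg (s := d + 1) (by linarith)).const_mul _).add
    (((integrableOn_Ici_rpow_mul_exp_neg (s := d) (by linarith)).const_mul x⁻¹).const_mul _)

noncomputable def riemannTerm (d : ℝ) (v : ℝ → ℝ) (x μ : ℝ) (k : ℕ) : ℝ :=
  if x ≤ μ * k then (μ * k) ^ (d - 1) * exp (-(μ * k)) * exp (v (1 / μ) - v k) else 0

section riemannTerm

variable {d : ℝ} {v : ℝ → ℝ} {x : ℝ}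

theorem mul_riemannTerm {μ : ℝ} (hμ : 0 < μ) (k : ℕ) :
    μ * riemannTerm d v x μ k = μ ^ d * exp (v (1 / μ)) *
      if x ≤ μ * k then (k : ℝ) ^ (d - 1) * exp (-(μ * k) - v k) else 0 := by
  unfold riemannTerm
  split_ifs
  · rw [mul_rpow hμ.le k.cast_nonneg, rpow_sub_one hμ.ne', exp_sub, exp_sub]
    field_simp
  · simp

theorem norm_riemannTerm_natFloor_le (hd : 0 ≤ d) (hx : 0 < x) {μ : ℝ} (hμ : 0 < μ)
    (hμ₁ : μ ≤ 1)
    (hvμ : ∀ k : ℝ, x ≤ μ * k → |v (1 / μ) - v k| ≤ |log (μ * k)|) {y : ℝ} (hy : 0 ≤ y) :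
    ‖riemannTerm d v x μ ⌊y / μ⌋₊‖ ≤ exp 1 / x * (y ^ (d + 1) + x⁻¹ * y ^ d) * exp (-y) := by
  unfold riemannTerm
  split_ifs with hxk
  · rw [norm_of_nonneg (by positivity)]
    exact rpow_sub_one_mul_exp_neg_mul_exp_le hd hx hxk (mul_natFloor_div_le hμ hy)
      (by linarith [lt_mul_natFloor_div_add hμ y]) ((le_abs_self _).trans (hvμ _ hxk))
  · rw [norm_zero]; positivity

theorem eventually_norm_riemannTerm_natFloor_le (hd : 0 ≤ d)
    (hdiff : ∀ᶠ y in atTop, DifferentiableAt ℝ v y)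
    (hv : Tendsto (fun y => y * deriv v y) atTop (𝓝 0)) (hx : 0 < x) :
    ∀ᶠ μ in 𝓝[>] 0, ∀ y, 0 ≤ y →
      ‖riemannTerm d v x μ ⌊y / μ⌋₊‖ ≤ exp 1 / x * (y ^ (d + 1) + x⁻¹ * y ^ d) * exp (-y) := by
  filter_upwards [self_mem_nhdsWithin, nhdsWithin_le_nhds (Iic_mem_nhds one_pos),
    eventually_abs_sub_le_mul_abs_log_mul hdiff hv hx one_pos] with μ h₀ h₁ h₂ y hy
  exact norm_riemannTerm_natFloor_le hd hx h₀ h₁ (by simpa using h₂) hy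

theorem tendsto_riemannTerm_natFloor (hdiff : ∀ᶠ y in atTop, DifferentiableAt ℝ v y)
    (hv : Tendsto (fun y => y * deriv v y) atTop (𝓝 0)) (hx : 0 < x) {y : ℝ} (hxy : x < y) :
    Tendsto (fun μ => riemannTerm d v x μ ⌊y / μ⌋₊) (𝓝[>] 0) (𝓝 (y ^ (d - 1) * exp (-y))) := by
  have hy : 0 < y := hx.trans hxy
  have hu := tendsto_mul_natFloor_div hy.le
  have hxu : ∀ᶠ μ in 𝓝[>] 0, x ≤ μ * ⌊y / μ⌋₊ :=
    (hu.eventually (lt_mem_nhds hxy)).mono fun _ => le_of_lt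
  have hlog : Tendsto (fun μ => log (μ * ⌊y / μ⌋₊)) (𝓝[>] 0) (𝓝 (log y)) :=
    (continuousAt_log hy.ne').tendsto.comp hu
  have hδ : Tendsto (fun μ => v (1 / μ) - v ⌊y / μ⌋₊) (𝓝[>] 0) (𝓝 0) := by
    refine (isLittleO_one_iff ℝ).1 (IsLittleO.trans_isBigO ?_ (hlog.isBigO_one ℝ))
    refine IsLittleO.of_bound fun ε hε => ?_
    filter_upwards [eventually_abs_sub_le_mul_abs_log_mul hdiff hv hx hε, hxu] with μ h hμ
    simpa using h _ hμ
  have hlim := ((((continuousAt_rpow_const y (d - 1) (Or.inl hy.ne')).tendsto.comp hu).mul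
    ((continuous_exp.tendsto _).comp hu.neg)).mul ((continuous_exp.tendsto 0).comp hδ))
  rw [exp_zero, mul_one] at hlim
  refine hlim.congr' ?_
  filter_upwards [hxu] with μ h
  simp [riemannTerm, if_pos h]

theorem ae_tendsto_riemannTerm_natFloor (hdiff : ∀ᶠ y in atTop, DifferentiableAt ℝ v y)
    (hv : Tendsto (fun y => y * deriv v y) atTop (𝓝 0)) (hx : 0 < x) :
    ∀ᵐ y ∂volume.restrict (Ici 0), Tendsto (fun μ => riemannTerm d v x μ ⌊y / μ⌋₊) (𝓝[>] 0)
      (𝓝 ((Ioi x).indicator (fun y => y ^ (d - 1) * exp (-y)) y)) := by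
  filter_upwards [ae_restrict_mem measurableSet_Ici, ae_restrict_of_ae (Measure.ae_ne volume x)]
    with y (hy : 0 ≤ y) hne
  rcases hne.lt_or_gt with hyx | hxy
  · rw [indicator_of_notMem (s := Ioi x) (not_lt.2 hyx.le)]
    refine tendsto_const_nhds.congr' ?_
    filter_upwards [self_mem_nhdsWithin] with μ (hμ : 0 < μ)
    rw [riemannTerm, if_neg (by linarith [mul_natFloor_div_le hμ hy])]
  · rw [indicator_of_mem (s := Ioi x) hxy]
    exact tendsto_riemannTerm_natFloor hdiff hv hx hxy

end riemannTerm

/-- Let `d ≥ 0` and `v` differentiable on `(0,∞)` with `x v'(x) → 0`. Then for each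
`x > 0`, `μ^d e^{v(1/μ)} ∑_{k ≥ x/μ} k^{d-1} e^{-μ k - v(k)} → ∫_x^∞ y^{d-1} e^{-y} dy`
as `μ ↓ 0`. -/
theorem incomplete_gamma_limit
    (d : ℝ) (hd : 0 ≤ d)
    (v : ℝ → ℝ)
    (hdiff : ∀ y ∈ Set.Ioi (0:ℝ), DifferentiableAt ℝ v y)
    (hv : Tendsto (fun y => y * deriv v y) atTop (nhds 0))
    (x : ℝ) (hx : 0 < x) :
    Tendsto
      (fun μ : ℝ => μ ^ d * Real.exp (v (1 / μ)) *
        ∑' k : ℕ, if x ≤ μ * k then (k : ℝ) ^ (d - 1) * Real.exp (-(μ * k) - v k) else 0)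
      (nhdsWithin 0 (Set.Ioi 0))
      (nhds (∫ y in Set.Ioi x, y ^ (d - 1) * Real.exp (-y))) := by
  have hdiff_atTop : ∀ᶠ y in atTop, DifferentiableAt ℝ v y := (eventually_gt_atTop 0).mono hdiff
  have hmajorant := integrableOn_Ici_majorant (x := x) (by linarith : -1 < d)
  have hmeas (μ : ℝ) : AEStronglyMeasurable (fun y => riemannTerm d v x μ ⌊y / μ⌋₊)
      (volume.restrict (Ici 0)) :=
    ((measurable_from_nat (f := riemannTerm d v x μ)).comp
      (Nat.measurable_floor.comp (measurable_id.div_const μ))).aestronglyMeasurable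
  have hbound : ∀ᶠ μ in 𝓝[>] 0, ∀ᵐ y ∂volume.restrict (Ici 0),
      ‖riemannTerm d v x μ ⌊y / μ⌋₊‖ ≤ exp 1 / x * (y ^ (d + 1) + x⁻¹ * y ^ d) * exp (-y) := by
    filter_upwards [eventually_norm_riemannTerm_natFloor_le hd hdiff_atTop hv hx] with μ hμ
    filter_upwards [ae_restrict_mem measurableSet_Ici] with y hy using hμ y hy
  have hlim := tendsto_integral_filter_of_dominated_convergence _ (.of_forall hmeas) hbound
    hmajorant (ae_tendsto_riemannTerm_natFloor hdiff_atTop hv hx)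
  rw [integral_indicator measurableSet_Ioi, Measure.restrict_restrict measurableSet_Ioi,
    inter_eq_left.2 (Ioi_subset_Ici hx.le)] at hlim
  refine hlim.congr' ?_
  filter_upwards [self_mem_nhdsWithin, hbound] with μ (hμ : 0 < μ) hb
  rw [integral_Ici_natFloor_div _ hμ (hmajorant.mono' (hmeas μ) hb),
    ← tsum_mul_left, ← tsum_mul_left]
  exact tsum_congr (mul_riemannTerm hμ)
end

section
/- Let $d \ge 0$ and let $v:(0,\infty)\to\mathbb{R}$ be differentiable with $x v'(x) \to 0$ as $x\to\infty$. Then $\lim_{\mu \downarrow 0}\; \mu^{d+1}\, e^{v(1/\mu)} \sum_{k=1}^{\infty} k^{d} e^{-\mu k - v(k)} = \Gamma(d+1)$. -/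
/-!
With `n = ⌈t / μ⌉₊`, the scaled sum is the integral over `t > 0` of the step function
`(μ n)^d e^{-μ n} e^{v(1/μ) - v(n)}`, and `t ≤ μ n ≤ t + μ`. In the logarithmic variable,
`w = v ∘ exp` has `w' → 0`. Hence `v(1/μ) - v(n) → 0` for fixed `t`, because
`log n - log (1/μ) = log (μ n) → log t` stays bounded, and globally
`|v y - v x| ≤ C + |log y - log x| / 2` on `[1, ∞)`. The latter gives the integrable majorant
`e^C (t + 2)^{d+1} t^{-1/2} e^{-t}`, so dominated convergence yields `∫ t^d e^{-t} = Γ(d+1)`.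
-/

open Filter Set MeasureTheory Topology Real

theorem Real.rpow_add_le_mul_rpow_add_rpow {a b p : ℝ} (ha : 0 ≤ a) (hb : 0 ≤ b)
    (hp : 1 ≤ p) : (a + b) ^ p ≤ 2 ^ (p - 1) * (a ^ p + b ^ p) := by
  exact_mod_cast NNReal.rpow_add_le_mul_rpow_add_rpow ⟨a, ha⟩ ⟨b, hb⟩ hp

theorem integrableOn_add_rpow_mul_rpow_mul_exp_neg {a b c : ℝ} (ha : 1 ≤ a) (hb : -1 < b)
    (hc : 0 ≤ c) : IntegrableOn (fun t => (t + c) ^ a * t ^ b * exp (-t)) (Ioi 0) := by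
  have gamma (s : ℝ) (hs : -1 < s) : IntegrableOn (fun t => t ^ s * exp (-t)) (Ioi 0) := by
    simpa [mul_comm] using GammaIntegral_convergent (s := s + 1) (by linarith)
  refine (((gamma (a + b) (by linarith)).add ((gamma b hb).const_mul (c ^ a))).const_mul
    (2 ^ (a - 1))).mono' (by fun_prop) ?_
  filter_upwards [ae_restrict_mem measurableSet_Ioi] with t (ht : 0 < t)
  simp only [Pi.add_apply]
  rw [norm_of_nonneg (by positivity), rpow_add ht]
  calc (t + c) ^ a * t ^ b * exp (-t)
      ≤ 2 ^ (a - 1) * (t ^ a + c ^ a) * t ^ b * exp (-t) := by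
        gcongr
        exact rpow_add_le_mul_rpow_add_rpow ht.le hc ha
    _ = _ := by ring

theorem exp_half_abs_log_le {x : ℝ} (hx : 0 < x) :
    exp (|log x| / 2) ≤ (x + 1) * x ^ (-(1 / 2 : ℝ)) := by
  have hsplit : (x + 1) * x ^ (-(1 / 2 : ℝ)) = exp (log x / 2) + exp (-(log x / 2)) := by
    rw [rpow_def_of_pos hx]
    nth_rewrite 1 [← exp_log hx]
    rw [add_mul, ← exp_add, one_mul]
    ring_nf
  rw [hsplit]
  rcases abs_cases (log x) with ⟨h, -⟩ | ⟨h, -⟩ <;> rw [h]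
  · linarith [exp_pos (-(log x / 2))]
  · rw [neg_div]
    linarith [exp_pos (log x / 2)]

section CeilDiv

variable {h t : ℝ}

theorem mem_Ioc_mul_iff_ceil_div_eq (hh : 0 < h) (k : ℕ) :
    t ∈ Ioc (h * k) (h * (k + 1)) ↔ ⌈t / h⌉₊ = k + 1 := by
  rw [Nat.ceil_eq_iff k.succ_ne_zero, mem_Ioc, lt_div_iff₀ hh, div_le_iff₀ hh]
  push_cast
  simp only [mul_comm h]

theorem hasSum_integral_comp_ceil_div {E : Type*} [NormedAddCommGroup E] [NormedSpace ℝ E]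
    [CompleteSpace E] {f : ℕ → E} (hh : 0 < h)
    (hf : IntegrableOn (fun t => f ⌈t / h⌉₊) (Ioi 0)) :
    HasSum (fun k : ℕ => h • f (k + 1)) (∫ t in Ioi 0, f ⌈t / h⌉₊) := by
  set s : ℕ → Set ℝ := fun k => Ioc (h * k) (h * (k + 1))
  have hunion : ⋃ k, s k = Ioi 0 := by
    ext t
    simp only [s, mem_iUnion, mem_Ioc_mul_iff_ceil_div_eq hh, mem_Ioi]
    rw [← div_pos_iff_of_pos_right hh, ← Nat.ceil_pos, ← Nat.exists_eq_add_one]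
  have hdisj : Pairwise (Function.onFun Disjoint s) := by
    intro i j hij
    refine Set.disjoint_left.2 fun t hi hj => hij ?_
    rw [mem_Ioc_mul_iff_ceil_div_eq hh] at hi hj
    omega
  have := hasSum_integral_iUnion (fun k => measurableSet_Ioc) hdisj (hunion ▸ hf)
  rw [hunion] at this
  convert this using 2 with k
  rw [setIntegral_congr_fun measurableSet_Ioc
      fun t ht => congrArg f ((mem_Ioc_mul_iff_ceil_div_eq hh k).1 ht),
    setIntegral_const, volume_real_Ioc_of_le (by gcongr; linarith)]
  ring_nf

theorem le_mul_ceil_div (hh : 0 < h) (t : ℝ) : t ≤ h * ⌈t / h⌉₊ := by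
  rw [← div_le_iff₀' hh]
  exact Nat.le_ceil _

theorem mul_ceil_div_lt_add (hh : 0 < h) (ht : 0 ≤ t) : h * ⌈t / h⌉₊ < t + h := by
  have := Nat.ceil_lt_add_one (div_nonneg ht hh.le)
  rwa [← mul_lt_mul_iff_of_pos_left hh, mul_add, mul_div_cancel₀ _ hh.ne', mul_one] at this

theorem tendsto_mul_ceil_div (ht : 0 ≤ t) :
    Tendsto (fun h : ℝ => h * ⌈t / h⌉₊) (𝓝[>] 0) (𝓝 t) := by
  have hup : Tendsto (fun h : ℝ => t + h) (𝓝[>] 0) (𝓝 t) := by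
    simpa using (tendsto_nhdsWithin_of_tendsto_nhds (continuous_id.tendsto 0)).const_add t
  refine tendsto_of_tendsto_of_tendsto_of_le_of_le' tendsto_const_nhds hup ?_ ?_ <;>
    filter_upwards [self_mem_nhdsWithin] with h (hh : 0 < h)
  · exact le_mul_ceil_div hh t
  · exact (mul_ceil_div_lt_add hh ht).le

end CeilDiv

section DerivTendstoZero

variable {f : ℝ → ℝ}

theorem exists_abs_sub_le_mul_of_tendsto_deriv (hf : ∀ᶠ x in atTop, DifferentiableAt ℝ f x)
    (hf' : Tendsto (deriv f) atTop (𝓝 0)) {ε : ℝ} (hε : 0 < ε) :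
    ∃ A, ∀ x ≥ A, ∀ y ≥ A, |f y - f x| ≤ ε * |y - x| := by
  obtain ⟨A, hA⟩ :=
    eventually_atTop.1 (hf.and (hf'.eventually (Metric.closedBall_mem_nhds 0 hε)))
  refine ⟨A, fun x hx y hy => ?_⟩
  simpa only [Real.norm_eq_abs] using
    (convex_Ici A).norm_image_sub_le_of_norm_deriv_le (fun z hz => (hA z hz).1)
      (fun z hz => by simpa using (hA z hz).2) hx hy

theorem exists_abs_sub_le_add_mul_of_tendsto_deriv {a : ℝ} (hc : ContinuousOn f (Ici a))
    (hf : ∀ᶠ x in atTop, DifferentiableAt ℝ f x) (hf' : Tendsto (deriv f) atTop (𝓝 0))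
    {ε : ℝ} (hε : 0 < ε) :
    ∃ C, ∀ x ≥ a, ∀ y ≥ a, |f y - f x| ≤ C + ε * |y - x| := by
  obtain ⟨A, hA⟩ := exists_abs_sub_le_mul_of_tendsto_deriv hf hf' hε
  obtain ⟨M, hM⟩ := isCompact_Icc.exists_bound_of_continuousOn
    (hc.mono (Icc_subset_Ici_self : Icc a (max a A) ⊆ Ici a))
  simp only [Real.norm_eq_abs] at hM
  -- clamp both points to `[A, ∞)`, where `f` is `ε`-Lipschitz; on `[a, A]` we have `|f| ≤ M`
  have hclamp : ∀ x ≥ a, |f (max x A) - f x| ≤ 2 * M := by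
    intro x hx
    have hM0 := (abs_nonneg _).trans (hM a ⟨le_rfl, le_max_left _ _⟩)
    rcases le_total x A with h | h
    · rw [max_eq_right h]
      have h1 := hM x ⟨hx, h.trans (le_max_right _ _)⟩
      have h2 := hM A ⟨hx.trans h, le_max_right _ _⟩
      linarith [abs_sub (f A) (f x)]
    · simp [max_eq_left h, hM0]
  refine ⟨4 * M, fun x hx y hy => ?_⟩
  have hmax : |max y A - max x A| ≤ |y - x| := abs_max_sub_max_le_abs y x A
  calc |f y - f x|
      ≤ |f y - f (max y A)| + |f (max y A) - f (max x A)| + |f (max x A) - f x| := by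
        linarith [abs_sub_le (f y) (f (max y A)) (f x),
          abs_sub_le (f (max y A)) (f (max x A)) (f x)]
    _ ≤ 2 * M + ε * |y - x| + 2 * M := by
        rw [abs_sub_comm]
        gcongr
        · exact hclamp y hy
        · exact (hA _ (le_max_right _ _) _ (le_max_right _ _)).trans (by gcongr)
        · exact hclamp x hx
    _ = 4 * M + ε * |y - x| := by ring

theorem tendsto_sub_of_tendsto_deriv {α : Type*} {l : Filter α}
    (hf : ∀ᶠ x in atTop, DifferentiableAt ℝ f x) (hf' : Tendsto (deriv f) atTop (𝓝 0))
    {a b : α → ℝ} {c : ℝ} (ha : Tendsto a l atTop)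
    (hab : Tendsto (fun i => b i - a i) l (𝓝 c)) :
    Tendsto (fun i => f (b i) - f (a i)) l (𝓝 0) := by
  have hb : Tendsto b l atTop := by simpa using ha.atTop_add hab
  rw [Metric.tendsto_nhds]
  intro ε hε
  have hc : 0 < |c| + 1 := by positivity
  obtain ⟨A, hA⟩ := exists_abs_sub_le_mul_of_tendsto_deriv hf hf' (div_pos hε hc)
  filter_upwards [ha.eventually_ge_atTop A, hb.eventually_ge_atTop A,
    hab.abs.eventually_lt_const (lt_add_one |c|)] with i hai hbi hi
  rw [Real.dist_eq, sub_zero]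
  calc |f (b i) - f (a i)| ≤ ε / (|c| + 1) * |b i - a i| := hA _ hai _ hbi
    _ < ε / (|c| + 1) * (|c| + 1) := by gcongr
    _ = ε := div_mul_cancel₀ ε hc.ne'

end DerivTendstoZero

section LogDerivTendstoZero

variable {v : ℝ → ℝ}

theorem differentiable_comp_exp (hdiff : ∀ y ∈ Ioi (0:ℝ), DifferentiableAt ℝ v y) :
    Differentiable ℝ fun s => v (exp s) :=
  fun s => (hdiff _ (exp_pos s)).comp s differentiableAt_exp

theorem tendsto_deriv_comp_exp (hdiff : ∀ y ∈ Ioi (0:ℝ), DifferentiableAt ℝ v y)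
    (hv : Tendsto (fun y => y * deriv v y) atTop (𝓝 0)) :
    Tendsto (deriv fun s => v (exp s)) atTop (𝓝 0) := by
  have hderiv : (deriv fun s => v (exp s)) = fun s => exp s * deriv v (exp s) := by
    funext s
    rw [mul_comm]
    exact ((hdiff _ (exp_pos s)).hasDerivAt.comp s (hasDerivAt_exp s)).deriv
  rw [hderiv]
  exact hv.comp tendsto_exp_atTop

theorem exists_abs_sub_le_add_mul_abs_log_sub
    (hdiff : ∀ y ∈ Ioi (0:ℝ), DifferentiableAt ℝ v y)
    (hv : Tendsto (fun y => y * deriv v y) atTop (𝓝 0)) {ε : ℝ} (hε : 0 < ε) :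
    ∃ C, ∀ x ≥ 1, ∀ y ≥ 1, |v y - v x| ≤ C + ε * |log y - log x| := by
  have hw := differentiable_comp_exp hdiff
  obtain ⟨C, hC⟩ := exists_abs_sub_le_add_mul_of_tendsto_deriv (a := 0)
    hw.continuous.continuousOn (.of_forall hw) (tendsto_deriv_comp_exp hdiff hv) hε
  refine ⟨C, fun x hx y hy => ?_⟩
  have := hC (log x) (log_nonneg hx) (log y) (log_nonneg hy)
  rwa [exp_log (by linarith), exp_log (by linarith)] at this

theorem tendsto_comp_mul_sub (hdiff : ∀ y ∈ Ioi (0:ℝ), DifferentiableAt ℝ v y)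
    (hv : Tendsto (fun y => y * deriv v y) atTop (𝓝 0)) {α : Type*} {l : Filter α}
    {x r : α → ℝ} {c : ℝ} (hx : Tendsto x l atTop) (hr : Tendsto r l (𝓝 c)) (hc : 0 < c) :
    Tendsto (fun i => v (r i * x i) - v (x i)) l (𝓝 0) := by
  have hw := differentiable_comp_exp hdiff
  have hlog : Tendsto (fun i => log (r i * x i) - log (x i)) l (𝓝 (log c)) := by
    refine ((continuousAt_log hc.ne').tendsto.comp hr).congr' ?_
    filter_upwards [hx.eventually_gt_atTop 0, hr.eventually_const_lt hc] with i hxi hri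
    rw [Function.comp_apply, log_mul hri.ne' hxi.ne', add_sub_cancel_right]
  refine (tendsto_sub_of_tendsto_deriv (.of_forall hw) (tendsto_deriv_comp_exp hdiff hv)
    (tendsto_log_atTop.comp hx) hlog).congr' ?_
  filter_upwards [hx.eventually_gt_atTop 0, hr.eventually_const_lt hc] with i hxi hri
  rw [Function.comp_apply, exp_log (mul_pos hri hxi), exp_log hxi]

end LogDerivTendstoZero

noncomputable def scaledTerm (d : ℝ) (v : ℝ → ℝ) (μ : ℝ) (n : ℕ) : ℝ :=
  (μ * n) ^ d * exp (-(μ * n)) * exp (v (1 / μ) - v n)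

theorem mul_scaledTerm_succ (d : ℝ) (v : ℝ → ℝ) {μ : ℝ} (hμ : 0 < μ) (k : ℕ) :
    μ ^ (d + 1) * exp (v (1 / μ)) *
        (((k : ℝ) + 1) ^ d * exp (-(μ * ((k : ℝ) + 1)) - v ((k : ℝ) + 1))) =
      μ * scaledTerm d v μ (k + 1) := by
  rw [scaledTerm, Nat.cast_add_one, mul_rpow hμ.le (by positivity), rpow_add_one hμ.ne',
    exp_sub, exp_sub]
  ring

theorem norm_scaledTerm_ceil_le {d : ℝ} (hd : 0 ≤ d) {v : ℝ → ℝ} {C : ℝ}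
    (hC : ∀ x ≥ 1, ∀ y ≥ 1, |v y - v x| ≤ C + 1 / 2 * |log y - log x|)
    {μ t : ℝ} (hμ : 0 < μ) (hμ1 : μ ≤ 1) (ht : 0 < t) :
    ‖scaledTerm d v μ ⌈t / μ⌉₊‖ ≤
      exp C * ((t + 2) ^ (d + 1) * t ^ (-(1 / 2 : ℝ)) * exp (-t)) := by
  set n := ⌈t / μ⌉₊
  have hn : (1 : ℝ) ≤ n := by exact_mod_cast Nat.one_le_ceil_iff.2 (div_pos ht hμ)
  have htx : t ≤ μ * n := le_mul_ceil_div hμ t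
  have hxt : μ * n ≤ t + 1 := by linarith [mul_ceil_div_lt_add hμ ht.le]
  have hx : 0 < μ * n := ht.trans_le htx
  have hv : v (1 / μ) - v n ≤ C + |log (μ * n)| / 2 := by
    have := hC n hn (1 / μ) (one_le_one_div hμ hμ1)
    rw [one_div, log_inv, ← neg_add', abs_neg, ← log_mul hμ.ne' (by positivity)] at this
    rw [one_div]
    linarith [le_abs_self (v μ⁻¹ - v n)]
  calc ‖scaledTerm d v μ n‖ = (μ * n) ^ d * exp (-(μ * n)) * exp (v (1 / μ) - v n) :=
        norm_of_nonneg (by unfold scaledTerm; positivity)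
    _ ≤ (μ * n) ^ d * exp (-(μ * n)) *
          (exp C * ((μ * n + 1) * (μ * n) ^ (-(1 / 2 : ℝ)))) := by
        gcongr
        calc exp (v (1 / μ) - v n) ≤ exp (C + |log (μ * n)| / 2) := exp_le_exp.2 hv
          _ = exp C * exp (|log (μ * n)| / 2) := exp_add _ _
          _ ≤ _ := by gcongr; exact exp_half_abs_log_le hx
    _ ≤ (t + 2) ^ d * exp (-t) * (exp C * ((t + 2) * t ^ (-(1 / 2 : ℝ)))) := by
        gcongr ?_ * ?_ * (_ * (?_ * ?_))
        · exact rpow_le_rpow hx.le (by linarith) hd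
        · exact exp_le_exp.2 (by linarith)
        · linarith
        · exact rpow_le_rpow_of_nonpos ht htx (by norm_num)
    _ = exp C * ((t + 2) ^ (d + 1) * t ^ (-(1 / 2 : ℝ)) * exp (-t)) := by
        rw [rpow_add_one (by positivity)]
        ring

theorem tendsto_scaledTerm_ceil (d : ℝ) {v : ℝ → ℝ}
    (hdiff : ∀ y ∈ Ioi (0:ℝ), DifferentiableAt ℝ v y)
    (hv : Tendsto (fun y => y * deriv v y) atTop (𝓝 0)) {t : ℝ} (ht : 0 < t) :
    Tendsto (fun μ => scaledTerm d v μ ⌈t / μ⌉₊) (𝓝[>] 0) (𝓝 (exp (-t) * t ^ d)) := by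
  have hx := tendsto_mul_ceil_div ht.le
  have hvx : Tendsto (fun μ : ℝ => v (1 / μ) - v ⌈t / μ⌉₊) (𝓝[>] 0) (𝓝 0) := by
    have := (tendsto_comp_mul_sub hdiff hv (by simpa using tendsto_inv_nhdsGT_zero) hx ht).neg
    rw [neg_zero] at this
    refine this.congr' ?_
    filter_upwards [self_mem_nhdsWithin] with μ (hμ : 0 < μ)
    rw [← div_eq_mul_inv, mul_div_cancel_left₀ _ hμ.ne', one_div, neg_sub]
  have := ((hx.rpow_const (p := d) (.inl ht.ne')).mul
    ((continuous_exp.tendsto _).comp hx.neg)).mul ((continuous_exp.tendsto 0).comp hvx)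
  rwa [exp_zero, mul_one, mul_comm] at this

/-- Let `d ≥ 0` and `v` differentiable on `(0,∞)` with `x v'(x) → 0`. Then
`μ^{d+1} e^{v(1/μ)} ∑_{k ≥ 1} k^d e^{-μ k - v(k)} → Γ(d+1)` as `μ ↓ 0`. -/
theorem gamma_limit_of_expected_mass
    (d : ℝ) (hd : 0 ≤ d)
    (v : ℝ → ℝ)
    (hdiff : ∀ y ∈ Set.Ioi (0:ℝ), DifferentiableAt ℝ v y)
    (hv : Tendsto (fun y => y * deriv v y) atTop (nhds 0)) :
    Tendsto
      (fun μ : ℝ => μ ^ (d + 1) * Real.exp (v (1 / μ)) *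
        ∑' k : ℕ, ((k : ℝ) + 1) ^ d *
          Real.exp (-(μ * ((k : ℝ) + 1)) - v ((k : ℝ) + 1)))
      (nhdsWithin 0 (Set.Ioi 0))
      (nhds (Real.Gamma (d + 1))) := by
  obtain ⟨C, hC⟩ := exists_abs_sub_le_add_mul_abs_log_sub hdiff hv one_half_pos
  set G : ℝ → ℝ := fun t => exp C * ((t + 2) ^ (d + 1) * t ^ (-(1 / 2 : ℝ)) * exp (-t))
  have hG : IntegrableOn G (Ioi 0) :=
    (integrableOn_add_rpow_mul_rpow_mul_exp_neg (by linarith) (by norm_num) zero_le_two).const_mul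
      _
  have hmeas (μ : ℝ) :
      AEStronglyMeasurable (fun t => scaledTerm d v μ ⌈t / μ⌉₊) (volume.restrict (Ioi 0)) :=
    ((measurable_from_nat (f := scaledTerm d v μ)).comp
      (Nat.measurable_ceil.comp (measurable_id.div_const μ))).aestronglyMeasurable
  have hbound : ∀ᶠ μ in 𝓝[>] 0,
      ∀ᵐ t ∂volume.restrict (Ioi 0), ‖scaledTerm d v μ ⌈t / μ⌉₊‖ ≤ G t := by
    filter_upwards [Ioc_mem_nhdsGT one_pos] with μ hμ
    exact ae_restrict_of_forall_mem measurableSet_Ioi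
      fun t ht => norm_scaledTerm_ceil_le hd hC hμ.1 hμ.2 ht
  have hsum : ∀ᶠ μ in 𝓝[>] 0, ∫ t in Ioi 0, scaledTerm d v μ ⌈t / μ⌉₊ =
      μ ^ (d + 1) * exp (v (1 / μ)) *
        ∑' k : ℕ, ((k : ℝ) + 1) ^ d * exp (-(μ * ((k : ℝ) + 1)) - v ((k : ℝ) + 1)) := by
    filter_upwards [hbound, self_mem_nhdsWithin] with μ hμG (hμ : 0 < μ)
    rw [← tsum_mul_left, ← (hasSum_integral_comp_ceil_div hμ (hG.mono' (hmeas μ) hμG)).tsum_eq]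
    exact tsum_congr fun k => (mul_scaledTerm_succ d v hμ k).symm
  rw [Gamma_eq_integral (by linarith), add_sub_cancel_right]
  refine (tendsto_integral_filter_of_dominated_convergence G (.of_forall hmeas) hbound hG
    ?_).congr' hsum
  exact ae_restrict_of_forall_mem measurableSet_Ioi
    fun t ht => tendsto_scaledTerm_ceil d hdiff hv ht
end

section
/- Let $v:(0,\infty)\to\mathbb{R}$ be continuous with $v(x) \to C \in \mathbb{R}$ as $x\to\infty$. Then $\lim_{\mu\downarrow 0}\; \mu \sum_{k=1}^\infty e^{-\mu k - v(k)} = e^{-C}$. -/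
/-!
Put `x = e^{-μ}` and `aₖ = e^{-v(k+1)}`, so that the sum is `x ∑ aₖ xᵏ` with `aₖ → e^{-C}`.
Abel's limit theorem, applied to the differences of the sequence `a`, gives
`(1 - x) ∑ aₖ xᵏ → e^{-C}` as `x → 1⁻`, and `μ / (1 - e^{-μ}) → 1` as `μ → 0⁺`.
-/

open Filter Set Topology

namespace Real

theorem summable_mul_pow_of_tendsto {a : ℕ → ℝ} {L x : ℝ} (ha : Tendsto a atTop (𝓝 L))
    (hx : |x| < 1) : Summable fun n ↦ a n * x ^ n := by
  refine summable_of_isBigO_nat (summable_geometric_of_abs_lt_one hx) ?_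
  simpa using (ha.isBigO_one ℝ).mul (Asymptotics.isBigO_refl (fun n ↦ x ^ n) atTop)

theorem tendsto_one_sub_mul_tsum_mul_pow_nhdsWithin_lt {a : ℕ → ℝ} {L : ℝ}
    (ha : Tendsto a atTop (𝓝 L)) :
    Tendsto (fun x ↦ (1 - x) * ∑' n, a n * x ^ n) (𝓝[<] 1) (𝓝 L) := by
  -- `(1 - x) ∑ aₙ xⁿ` is the power series of the differences of `0, a₀, a₁, …`,
  -- whose partial sums are that sequence itself.
  set b : ℕ → ℝ := fun n ↦ Nat.casesOn n 0 a
  have hb : Tendsto b atTop (𝓝 L) := (tendsto_add_atTop_iff_nat 1).mp ha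
  have hpartial : Tendsto (fun n ↦ ∑ i ∈ Finset.range n, (b (i + 1) - b i)) atTop (𝓝 L) := by
    refine hb.congr fun n ↦ ?_
    rw [Finset.sum_range_sub]
    exact (sub_zero _).symm
  refine (tendsto_tsum_powerSeries_nhdsWithin_lt hpartial).congr' ?_
  filter_upwards [Ioo_mem_nhdsLT (show (-1 : ℝ) < 1 by norm_num)] with x hx
  have hx' : |x| < 1 := abs_lt.mpr hx
  have hsa := summable_mul_pow_of_tendsto ha hx'
  have hsb := summable_mul_pow_of_tendsto hb hx'
  have hshift : ∑' n, b n * x ^ n = x * ∑' n, a n * x ^ n := by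
    rw [hsb.tsum_eq_zero_add, ← tsum_mul_left]
    simp only [b, pow_succ, Nat.rec_zero, pow_zero, mul_one, zero_add, mul_comm, mul_left_comm]
  simp only [sub_mul]
  rw [hsa.tsum_sub hsb, hshift]
  ring

theorem tendsto_div_one_sub_exp_neg_nhdsGT_zero :
    Tendsto (fun μ ↦ μ / (1 - exp (-μ))) (𝓝[>] 0) (𝓝 1) := by
  have hderiv : HasDerivAt (fun μ ↦ 1 - exp (-μ)) 1 0 := by
    simpa using ((hasDerivAt_neg 0).exp).const_sub 1
  have hslope := (hasDerivAt_iff_tendsto_slope.mp hderiv).mono_left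
    (nhdsWithin_mono 0 fun μ (hμ : μ ∈ Ioi 0) ↦ ne_of_gt hμ)
  simpa [slope_def_field] using hslope.inv₀ one_ne_zero

theorem tendsto_exp_neg_nhdsGT_zero_nhdsLT_one :
    Tendsto (fun μ ↦ exp (-μ)) (𝓝[>] 0) (𝓝[<] 1) := by
  refine tendsto_nhdsWithin_iff.mpr ⟨?_, ?_⟩
  · simpa using (continuous_neg.rexp.tendsto 0).mono_left nhdsWithin_le_nhds
  · filter_upwards [self_mem_nhdsWithin] with μ (hμ : 0 < μ)
    simpa using hμ

end Real

theorem mu_times_sum_tendsto_general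
    (v : ℝ → ℝ) (C : ℝ)
    (hv : Tendsto v atTop (nhds C)) :
    Tendsto
      (fun μ : ℝ => μ *
        ∑' k : ℕ, Real.exp (-(μ * ((k : ℝ) + 1)) - v ((k : ℝ) + 1)))
      (nhdsWithin 0 (Set.Ioi 0))
      (nhds (Real.exp (-C))) := by
  set a : ℕ → ℝ := fun k ↦ Real.exp (-v (k + 1))
  have ha : Tendsto a atTop (𝓝 (Real.exp (-C))) :=
    (Real.continuous_exp.tendsto _).comp
      (hv.comp (tendsto_natCast_atTop_atTop.atTop_add tendsto_const_nhds)).neg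
  have habel := (Real.tendsto_one_sub_mul_tsum_mul_pow_nhdsWithin_lt ha).comp
    Real.tendsto_exp_neg_nhdsGT_zero_nhdsLT_one
  have hlim := (Real.tendsto_div_one_sub_exp_neg_nhdsGT_zero.mul
    (Real.tendsto_exp_neg_nhdsGT_zero_nhdsLT_one.mono_right nhdsWithin_le_nhds)).mul habel
  rw [one_mul, one_mul] at hlim
  refine hlim.congr' ?_
  filter_upwards [self_mem_nhdsWithin] with μ (hμ : 0 < μ)
  have hne : 1 - Real.exp (-μ) ≠ 0 :=
    (sub_pos.mpr (Real.exp_lt_one_iff.mpr (neg_lt_zero.mpr hμ))).ne'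
  have hterm : ∀ k : ℕ, Real.exp (-(μ * ((k : ℝ) + 1)) - v ((k : ℝ) + 1))
      = Real.exp (-μ) * (a k * Real.exp (-μ) ^ k) := by
    intro k
    rw [← Real.exp_nat_mul, ← Real.exp_add, ← Real.exp_add]
    ring_nf
  simp only [Function.comp_apply, tsum_congr hterm, tsum_mul_left]
  field_simp

/-- Let `v` be continuous on `(0,∞)` with `v(x) → C`. Then
`μ ∑_{k ≥ 1} e^{-μ k - v(k)} → e^{-C}` as `μ ↓ 0`. -/
theorem mu_times_sum_tendsto
    (v : ℝ → ℝ) (C : ℝ)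
    (hcont : ContinuousOn v (Set.Ioi 0))
    (hv : Tendsto v atTop (nhds C)) :
    Tendsto
      (fun μ : ℝ => μ *
        ∑' k : ℕ, Real.exp (-(μ * ((k : ℝ) + 1)) - v ((k : ℝ) + 1)))
      (nhdsWithin 0 (Set.Ioi 0))
      (nhds (Real.exp (-C))) :=
  mu_times_sum_tendsto_general v C hv
end

section
/- Let $u:(0,\infty)\to\mathbb{R}$ be twice differentiable with $\lim_{x\to\infty} x^2 u''(x) = +\infty$. For $\mu > \mu_* := -\lim_{x\to\infty} u'(x)$ let $\varkappa(\mu)$ be the largest solution of $u'(\varkappa) = -\mu$, and set $S_\mu(a,b) = \sum_{a \le k < b} e^{-\mu k - u(k)}$, $S_\mu = S_\mu(1,\infty)$. Then for any $0 < \lambda_1 < 1 < \lambda_2$, $\lim_{\mu \downarrow \mu_*} S_\mu(\varkappa\lambda_1, \varkappa\lambda_2)/S_\mu = 1$. -/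
open Filter Set

/-- The filter of real `μ` approaching `μ⋆ ∈ ℝ ∪ {±∞}` from above. -/
noncomputable def muDownTo (μstar : EReal) : Filter ℝ :=
  Filter.comap (fun μ : ℝ => (μ : EReal)) (nhdsWithin μstar (Set.Ioi μstar))

/-- `S_μ(a,b) = ∑_{a ≤ k < b} e^{-μ k - u(k)}`, summing over integers `k ≥ 1`. -/
noncomputable def Spart (u : ℝ → ℝ) (μ a b : ℝ) : ℝ :=
  ∑' k : ℕ, if a ≤ (k : ℝ) + 1 ∧ (k : ℝ) + 1 < b then
    Real.exp (-(μ * ((k : ℝ) + 1)) - u ((k : ℝ) + 1)) else 0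

/-- `S_μ = ∑_{k ≥ 1} e^{-μ k - u(k)}`. -/
noncomputable def Stot (u : ℝ → ℝ) (μ : ℝ) : ℝ :=
  ∑' k : ℕ, Real.exp (-(μ * ((k : ℝ) + 1)) - u ((k : ℝ) + 1))

open Real Topology

/-! Write `φ(x) = μx + u(x)`, so that the summands are `e^{-φ(k)}`. Once `x²u'' ≥ M` on `[R, ∞)`,
the function `u'(x) + M/x` is increasing there, so `φ' = u' + μ` lies below `M/κ - M/x` on
`[R, κ]` and above it on `[κ, ∞)`. Hence `φ` decreases up to `κ`, increases after it, and grows at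
least linearly away from the window `[a, b) = [κλ₁, κλ₂)`: with slope `c = M/a - M/κ` to the left
of `a` and slope `d = M/κ - M/b` to the right of `b`. The tails are thus geometric series, at most
`(1 + 1/c) e^{-φ(a)}` and `(1 + 1/d) e^{-φ(b)}`, plus a block of `R` terms below `R` bounded by
compactness, while the window holds about `κ - a` terms `≥ e^{-φ(a)}` and `b - κ` terms
`≥ e^{-φ(b)}`. Since `1/c` and `1/d` are `O(κ/M)`, the tails are `O(1/M)` times the window sum
once `κ(μ)` is large, and `κ(μ) → ∞` as `μ ↓ μ⋆` because `u'` increases strictly to `-μ⋆`. -/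

lemma one_sub_exp_neg_inv_le {x : ℝ} (hx : 0 < x) : (1 - exp (-x))⁻¹ ≤ 1 + 1 / x := by
  have hexp : exp (-x) ≤ (1 + x)⁻¹ := by
    rw [exp_neg]
    exact inv_anti₀ (by linarith) (by linarith [add_one_le_exp x])
  have hlow : x / (1 + x) ≤ 1 - exp (-x) := by
    have : x / (1 + x) = 1 - (1 + x)⁻¹ := by field_simp; ring
    linarith
  calc (1 - exp (-x))⁻¹ ≤ (x / (1 + x))⁻¹ := inv_anti₀ (by positivity) hlow
    _ = 1 + 1 / x := by field_simp; ring

lemma dist_div_one_le {S T ε : ℝ} (hS : 0 < S) (hST : S ≤ T) (hT : T ≤ (1 + ε) * S) :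
    dist (S / T) 1 ≤ ε := by
  have hT0 : 0 < T := hS.trans_le hST
  rw [Real.dist_eq, abs_of_nonpos (by rw [sub_nonpos, div_le_one hT0]; exact hST),
    neg_sub, one_sub_div hT0.ne', div_le_iff₀ hT0]
  nlinarith

lemma exists_pos_nat_forall_ge_of_eventually {p : ℝ → Prop} (h : ∀ᶠ x in atTop, p x) :
    ∃ N : ℕ, 0 < N ∧ ∀ x : ℝ, N ≤ x → p x := by
  obtain ⟨r, hr⟩ := eventually_atTop.1 h
  obtain ⟨N, hN⟩ := exists_nat_ge (max r 1)
  exact ⟨N, by exact_mod_cast zero_lt_one.trans_le ((le_max_right r 1).trans hN),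
    fun x hx => hr x ((le_max_left r 1).trans (hN.trans hx))⟩

lemma summable_ite_of_lt {f : ℕ → ℝ} {p : ℕ → Prop} [DecidablePred p] {b : ℝ}
    (h : ∀ n, p n → (n : ℝ) < b) : Summable fun n => if p n then f n else 0 :=
  summable_of_ne_finset_zero (s := Finset.range ⌈b⌉₊) fun n hn =>
    if_neg fun hp => hn (Finset.mem_range.2 (Nat.lt_ceil.2 (h n hp)))

lemma summable_ite_ge_exp_neg_mul_sub {d : ℝ} (hd : 0 < d) (x : ℝ) :
    Summable fun n : ℕ => if x ≤ n then exp (-(d * (n - x))) else 0 := by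
  have hgeom : Summable fun n : ℕ => exp (d * x) * exp (-d) ^ n :=
    (summable_geometric_of_lt_one (exp_pos _).le (exp_lt_one_iff.2 (by linarith))).mul_left _
  refine hgeom.of_nonneg_of_le (fun n => by split_ifs <;> positivity) fun n => ?_
  split_ifs
  · rw [← exp_nat_mul, ← exp_add]
    exact le_of_eq (by ring_nf)
  · positivity

lemma tsum_ite_ge_exp_neg_mul_sub_le {d : ℝ} (hd : 0 < d) (x : ℝ) :
    ∑' n : ℕ, (if x ≤ n then exp (-(d * (n - x))) else 0) ≤ 1 + 1 / d := by
  have hr : exp (-d) < 1 := exp_lt_one_iff.2 (by linarith)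
  have hsum := summable_ite_ge_exp_neg_mul_sub hd x
  rw [← hsum.sum_add_tsum_nat_add ⌈x⌉₊, Finset.sum_eq_zero fun n hn =>
    if_neg (not_le.2 (Nat.lt_ceil.1 (Finset.mem_range.1 hn))), zero_add]
  have htail : ∀ i : ℕ, (if x ≤ ((i + ⌈x⌉₊ : ℕ) : ℝ) then
      exp (-(d * ((i + ⌈x⌉₊ : ℕ) - x))) else 0) ≤ exp (-d) ^ i := by
    intro i
    split_ifs
    · rw [← exp_nat_mul, exp_le_exp]
      have : x ≤ ⌈x⌉₊ := Nat.le_ceil x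
      push_cast
      nlinarith
    · positivity
  calc _ ≤ ∑' i : ℕ, exp (-d) ^ i :=
        ((summable_nat_add_iff _).2 hsum).tsum_le_tsum htail
          (summable_geometric_of_lt_one (exp_pos _).le hr)
    _ = (1 - exp (-d))⁻¹ := tsum_geometric_of_lt_one (exp_pos _).le hr
    _ ≤ 1 + 1 / d := one_sub_exp_neg_inv_le hd

lemma tsum_ite_le_exp_neg_mul_sub_le {d : ℝ} (hd : 0 < d) (x : ℝ) :
    ∑' n : ℕ, (if (n : ℝ) ≤ x then exp (-(d * (x - n))) else 0) ≤ 1 + 1 / d := by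
  have hr : exp (-d) < 1 := exp_lt_one_iff.2 (by linarith)
  set N := ⌊x⌋₊
  rw [tsum_eq_sum (s := Finset.range (N + 1)) fun n hn => if_neg fun hnx =>
    hn (Finset.mem_range.2 (Nat.lt_succ_of_le (Nat.le_floor hnx)))]
  have hterm : ∀ n ∈ Finset.range (N + 1),
      (if (n : ℝ) ≤ x then exp (-(d * (x - n))) else 0) ≤ exp (-d) ^ (N + 1 - 1 - n) := by
    intro n hn
    split_ifs with hnx
    · have hnN : n ≤ N := Nat.lt_succ_iff.1 (Finset.mem_range.1 hn)
      have hNx : (N : ℝ) ≤ x := Nat.floor_le ((Nat.cast_nonneg n).trans hnx)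
      rw [← exp_nat_mul, exp_le_exp, Nat.add_sub_cancel, Nat.cast_sub hnN]
      nlinarith
    · positivity
  calc _ ≤ ∑ n ∈ Finset.range (N + 1), exp (-d) ^ (N + 1 - 1 - n) := Finset.sum_le_sum hterm
    _ = ∑ j ∈ Finset.range (N + 1), exp (-d) ^ j := Finset.sum_range_reflect _ _
    _ ≤ ∑' j : ℕ, exp (-d) ^ j :=
        (summable_geometric_of_lt_one (exp_pos _).le hr).sum_le_tsum _ fun _ _ => by positivity
    _ = (1 - exp (-d))⁻¹ := tsum_geometric_of_lt_one (exp_pos _).le hr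
    _ ≤ 1 + 1 / d := one_sub_exp_neg_inv_le hd

lemma mul_le_tsum_ite_of_le {f : ℕ → ℝ} {a b x y c : ℝ} (hf : ∀ n, 0 ≤ f n) (hx : 0 ≤ x)
    (hax : a ≤ x) (hyb : y ≤ b) (hc : 0 ≤ c)
    (h : ∀ n : ℕ, x ≤ (n : ℝ) + 1 → (n : ℝ) + 1 < y → c ≤ f n) :
    (y - x - 2) * c ≤ ∑' n : ℕ, if a ≤ (n : ℝ) + 1 ∧ (n : ℝ) + 1 < b then f n else 0 := by
  set s := Finset.Ico ⌈x⌉₊ ⌈y - 1⌉₊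
  have hcard : y - x - 2 ≤ s.card := by
    have hsub : (⌈y - 1⌉₊ : ℝ) ≤ (⌈y - 1⌉₊ - ⌈x⌉₊ : ℕ) + ⌈x⌉₊ := by exact_mod_cast le_tsub_add
    rw [Nat.card_Ico]
    linarith [Nat.le_ceil (y - 1), Nat.ceil_lt_add_one hx]
  have hmem : ∀ n ∈ s, x ≤ (n : ℝ) ∧ (n : ℝ) + 1 < y := fun n hn => by
    obtain ⟨h1, h2⟩ := Finset.mem_Ico.1 hn
    exact ⟨Nat.ceil_le.1 h1, by linarith [Nat.lt_ceil.1 h2]⟩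
  calc (y - x - 2) * c ≤ s.card * c := mul_le_mul_of_nonneg_right hcard hc
    _ ≤ ∑ n ∈ s, if a ≤ (n : ℝ) + 1 ∧ (n : ℝ) + 1 < b then f n else 0 := by
        rw [← nsmul_eq_mul]
        refine Finset.card_nsmul_le_sum _ _ _ fun n hn => ?_
        obtain ⟨hxn, hny⟩ := hmem n hn
        rw [if_pos ⟨by linarith, by linarith⟩]
        exact h n (by linarith) hny
    _ ≤ _ := (summable_ite_of_lt (b := b) fun n hn => by linarith [hn.2]).sum_le_tsum _
        fun n _ => by split_ifs <;> simp [hf]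

lemma tsum_eq_tail_add_window_add_tail {f : ℕ → ℝ} {a b : ℝ} (hab : a ≤ b)
    (hf : Summable fun n : ℕ => if b ≤ (n : ℝ) + 1 then f n else 0) :
    ∑' n, f n = (∑' n : ℕ, if (n : ℝ) + 1 < a then f n else 0)
      + (∑' n : ℕ, if a ≤ (n : ℝ) + 1 ∧ (n : ℝ) + 1 < b then f n else 0)
      + ∑' n : ℕ, if b ≤ (n : ℝ) + 1 then f n else 0 := by
  have hleft : Summable fun n : ℕ => if (n : ℝ) + 1 < a then f n else 0 :=
    summable_ite_of_lt (b := a) fun n hn => by linarith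
  have hmid : Summable fun n : ℕ => if a ≤ (n : ℝ) + 1 ∧ (n : ℝ) + 1 < b then f n else 0 :=
    summable_ite_of_lt (b := b) fun n hn => by linarith [hn.2]
  rw [← hleft.tsum_add hmid, ← (hleft.add hmid).tsum_add hf]
  refine tsum_congr fun n => ?_
  by_cases h1 : (n : ℝ) + 1 < a
  · simp [h1, not_le.2 h1, not_le.2 (h1.trans_le hab)]
  · by_cases h2 : (n : ℝ) + 1 < b <;> simp [h1, h2, not_lt.1 h1]

lemma monotoneOn_add_div_of_le_sq_mul_deriv {f : ℝ → ℝ} {M R : ℝ} (hR : 0 < R)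
    (hf : ∀ x, R ≤ x → DifferentiableAt ℝ f x) (hM : ∀ x, R ≤ x → M ≤ x ^ 2 * deriv f x) :
    MonotoneOn (fun x => f x + M / x) (Ici R) := by
  have hd : ∀ x, R ≤ x → HasDerivAt (fun x => f x + M / x) (deriv f x - M / x ^ 2) x := by
    intro x hx
    have hx0 : x ≠ 0 := (hR.trans_le hx).ne'
    have hinv : HasDerivAt (fun y => M / y) (-(M / x ^ 2)) x := by
      simpa [div_eq_mul_inv] using (hasDerivAt_inv hx0).const_mul M
    simpa [sub_eq_add_neg] using (hf x hx).hasDerivAt.fun_add hinv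
  refine monotoneOn_of_deriv_nonneg (convex_Ici R)
    (fun x hx => (hd x hx).continuousAt.continuousWithinAt)
    (fun x hx => (hd x (interior_subset hx)).differentiableAt.differentiableWithinAt)
    fun x hx => ?_
  rw [interior_Ici] at hx
  rw [(hd x hx.le).deriv, sub_nonneg, div_le_iff₀ (by nlinarith [hR.trans hx])]
  linarith [hM x hx.le]

def phase (u : ℝ → ℝ) (μ x : ℝ) : ℝ := μ * x + u x

lemma exp_sub_eq_exp_neg_phase (u : ℝ → ℝ) (μ x : ℝ) :
    exp (-(μ * x) - u x) = exp (-phase u μ x) := by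
  rw [phase, neg_add, sub_eq_add_neg]

lemma hasDerivAt_phase {u : ℝ → ℝ} {x : ℝ} (μ : ℝ) (hu : DifferentiableAt ℝ u x) :
    HasDerivAt (phase u μ) (μ + deriv u x) x := by
  have h := ((hasDerivAt_id x).const_mul μ).fun_add hu.hasDerivAt
  rw [mul_one] at h
  exact h

section Phase

variable {u : ℝ → ℝ} {μ κ M R : ℝ}

lemma phase_sub_le_of_le_kappa (hR : 0 < R)
    (hu : ∀ x, R ≤ x → DifferentiableAt ℝ u x ∧ DifferentiableAt ℝ (deriv u) x) (hM0 : 0 ≤ M)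
    (hM : ∀ x, R ≤ x → M ≤ x ^ 2 * deriv (deriv u) x) (hκ : deriv u κ = -μ)
    {y z : ℝ} (hy : R ≤ y) (hyz : y ≤ z) (hz : z ≤ κ) :
    phase u μ z - phase u μ y ≤ (M / κ - M / z) * (z - y) := by
  have hg := monotoneOn_add_div_of_le_sq_mul_deriv hR (fun x hx => (hu x hx).2) hM
  have hd : ∀ x ∈ Icc y z, HasDerivAt (phase u μ) (μ + deriv u x) x :=
    fun x hx => hasDerivAt_phase μ (hu x (hy.trans hx.1)).1
  refine (convex_Icc y z).image_sub_le_mul_sub_of_deriv_le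
    (fun x hx => (hd x hx).continuousAt.continuousWithinAt)
    (fun x hx => (hd x (interior_subset hx)).differentiableAt.differentiableWithinAt)
    (fun x hx => ?_) y ⟨le_rfl, hyz⟩ z ⟨hyz, le_rfl⟩ hyz
  rw [interior_Icc] at hx
  have hxR : R ≤ x := hy.trans hx.1.le
  have hgx := hg hxR (hxR.trans (hx.2.le.trans hz)) (hx.2.le.trans hz)
  have hzx : M / z ≤ M / x := div_le_div_of_nonneg_left hM0 (hR.trans_le hxR) hx.2.le
  simp only at hgx
  rw [(hd x (Ioo_subset_Icc_self hx)).deriv]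
  linarith

lemma le_phase_sub_of_kappa_le (hR : 0 < R)
    (hu : ∀ x, R ≤ x → DifferentiableAt ℝ u x ∧ DifferentiableAt ℝ (deriv u) x) (hM0 : 0 ≤ M)
    (hM : ∀ x, R ≤ x → M ≤ x ^ 2 * deriv (deriv u) x) (hκ : deriv u κ = -μ) (hRκ : R ≤ κ)
    {y z : ℝ} (hy : κ ≤ y) (hyz : y ≤ z) :
    (M / κ - M / y) * (z - y) ≤ phase u μ z - phase u μ y := by
  have hg := monotoneOn_add_div_of_le_sq_mul_deriv hR (fun x hx => (hu x hx).2) hM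
  have hd : ∀ x ∈ Ici y, HasDerivAt (phase u μ) (μ + deriv u x) x :=
    fun x hx => hasDerivAt_phase μ (hu x (hRκ.trans (hy.trans hx))).1
  refine (convex_Ici y).mul_sub_le_image_sub_of_le_deriv
    (fun x hx => (hd x hx).continuousAt.continuousWithinAt)
    (fun x hx => (hd x (interior_subset hx)).differentiableAt.differentiableWithinAt)
    (fun x hx => ?_) y self_mem_Ici z hyz hyz
  rw [interior_Ici] at hx
  have hκx : κ ≤ x := hy.trans hx.le
  have hgx := hg hRκ (hRκ.trans hκx) hκx
  have hyx : M / x ≤ M / y := div_le_div_of_nonneg_left hM0 (hR.trans_le (hRκ.trans hy)) hx.le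
  simp only at hgx
  rw [(hd x (mem_Ici.2 hx.le)).deriv]
  linarith

end Phase

lemma Stot_eq_tsum_phase (u : ℝ → ℝ) (μ : ℝ) :
    Stot u μ = ∑' n : ℕ, exp (-phase u μ (n + 1)) := by
  simp only [Stot, exp_sub_eq_exp_neg_phase]

lemma Spart_eq_tsum_phase (u : ℝ → ℝ) (μ a b : ℝ) :
    Spart u μ a b = ∑' n : ℕ,
      if a ≤ (n : ℝ) + 1 ∧ (n : ℝ) + 1 < b then exp (-phase u μ (n + 1)) else 0 := by
  simp only [Spart, exp_sub_eq_exp_neg_phase]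

lemma tsum_ite_lt_const (R : ℕ) (c : ℝ) : ∑' n : ℕ, (if n < R then c else 0) = R * c := by
  rw [tsum_eq_sum (s := Finset.range R) fun n hn => if_neg (by simpa using hn),
    Finset.sum_ite_of_true fun n hn => Finset.mem_range.1 hn]
  simp

section FixedMu

variable {u : ℝ → ℝ} {μ κ M R a b : ℝ}

lemma mul_exp_neg_phase_le_Spart_left (hR : 0 < R)
    (hu : ∀ x, R ≤ x → DifferentiableAt ℝ u x ∧ DifferentiableAt ℝ (deriv u) x) (hM0 : 0 ≤ M)
    (hM : ∀ x, R ≤ x → M ≤ x ^ 2 * deriv (deriv u) x) (hκ : deriv u κ = -μ)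
    (hRa : R ≤ a) (hκb : κ ≤ b) :
    (κ - a - 2) * exp (-phase u μ a) ≤ Spart u μ a b := by
  rw [Spart_eq_tsum_phase]
  refine mul_le_tsum_ite_of_le (fun n => (exp_pos _).le) (hR.le.trans hRa) le_rfl hκb (exp_pos _).le
    fun n h1 h2 => ?_
  have hsub := phase_sub_le_of_le_kappa hR hu hM0 hM hκ hRa h1 h2.le
  have hdiv : M / κ ≤ M / (n + 1) :=
    div_le_div_of_nonneg_left hM0 (hR.trans_le (hRa.trans h1)) h2.le
  rw [exp_le_exp, neg_le_neg_iff]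
  linarith [mul_nonpos_of_nonpos_of_nonneg (sub_nonpos.2 hdiv) (sub_nonneg.2 h1)]

lemma mul_exp_neg_phase_le_Spart_right (hR : 0 < R)
    (hu : ∀ x, R ≤ x → DifferentiableAt ℝ u x ∧ DifferentiableAt ℝ (deriv u) x) (hM0 : 0 ≤ M)
    (hM : ∀ x, R ≤ x → M ≤ x ^ 2 * deriv (deriv u) x) (hκ : deriv u κ = -μ)
    (hRκ : R ≤ κ) (haκ : a ≤ κ) :
    (b - κ - 2) * exp (-phase u μ b) ≤ Spart u μ a b := by
  rw [Spart_eq_tsum_phase]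
  refine mul_le_tsum_ite_of_le (fun n => (exp_pos _).le) (hR.le.trans hRκ) haκ le_rfl (exp_pos _).le
    fun n h1 h2 => ?_
  have hsub := le_phase_sub_of_kappa_le hR hu hM0 hM hκ hRκ h1 h2.le
  have hdiv : M / (n + 1) ≤ M / κ := div_le_div_of_nonneg_left hM0 (hR.trans_le hRκ) h1
  rw [exp_le_exp, neg_le_neg_iff]
  linarith [mul_nonneg (sub_nonneg.2 hdiv) (sub_nonneg.2 h2.le)]

lemma summable_right_tail_and_tsum_le (hR : 0 < R)
    (hu : ∀ x, R ≤ x → DifferentiableAt ℝ u x ∧ DifferentiableAt ℝ (deriv u) x) (hM0 : 0 < M)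
    (hM : ∀ x, R ≤ x → M ≤ x ^ 2 * deriv (deriv u) x) (hκ : deriv u κ = -μ)
    (hRκ : R ≤ κ) (hκb : κ < b) :
    (Summable fun n : ℕ => if b ≤ (n : ℝ) + 1 then exp (-phase u μ (n + 1)) else 0) ∧
      ∑' n : ℕ, (if b ≤ (n : ℝ) + 1 then exp (-phase u μ (n + 1)) else 0)
        ≤ (1 + 1 / (M / κ - M / b)) * exp (-phase u μ b) := by
  set f := fun n : ℕ => if b ≤ (n : ℝ) + 1 then exp (-phase u μ (n + 1)) else 0
  set d := M / κ - M / b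
  have hd : 0 < d := sub_pos.2 (div_lt_div_of_pos_left hM0 (hR.trans_le hRκ) hκb)
  set g := fun n : ℕ => if b - 1 ≤ (n : ℝ) then exp (-(d * (n - (b - 1)))) else 0
  have hle : ∀ n, f n ≤ exp (-phase u μ b) * g n := by
    intro n
    by_cases hn : b ≤ (n : ℝ) + 1
    · have hsub := le_phase_sub_of_kappa_le hR hu hM0.le hM hκ hRκ hκb.le hn
      simp only [f, g, if_pos hn, if_pos (by linarith : b - 1 ≤ (n : ℝ)), ← exp_add, exp_le_exp]
      linarith
    · simp only [f, g, if_neg hn]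
      exact mul_nonneg (exp_pos _).le (by split_ifs <;> positivity)
  have hf : Summable f := ((summable_ite_ge_exp_neg_mul_sub hd _).mul_left _).of_nonneg_of_le
    (fun n => by simp only [f]; split_ifs <;> positivity) hle
  refine ⟨hf, ?_⟩
  calc ∑' n, f n ≤ ∑' n, exp (-phase u μ b) * g n :=
        hf.tsum_le_tsum hle ((summable_ite_ge_exp_neg_mul_sub hd _).mul_left _)
    _ ≤ exp (-phase u μ b) * (1 + 1 / d) := by
        rw [tsum_mul_left]
        exact mul_le_mul_of_nonneg_left (tsum_ite_ge_exp_neg_mul_sub_le hd _) (exp_pos _).le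
    _ = (1 + 1 / d) * exp (-phase u μ b) := mul_comm _ _

lemma exp_neg_phase_ite_le_left {N : ℕ} {C : ℝ}
    (hu : ∀ x, (N : ℝ) ≤ x → DifferentiableAt ℝ u x ∧ DifferentiableAt ℝ (deriv u) x)
    (hN : 0 < N) (hM0 : 0 ≤ M) (hM : ∀ x, (N : ℝ) ≤ x → M ≤ x ^ 2 * deriv (deriv u) x)
    (hκ : deriv u κ = -μ) (hC : ∀ t ∈ Icc 1 (N : ℝ), phase u μ N - phase u μ t ≤ C)
    (hNa : (N : ℝ) ≤ a) (haκ : a ≤ κ) (n : ℕ) :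
    (if (n : ℝ) + 1 < a then exp (-phase u μ (n + 1)) else 0)
      ≤ exp (-phase u μ a) * ((if n < N then exp C else 0)
        + if (n : ℝ) ≤ a - 1 then exp (-((M / a - M / κ) * (a - 1 - n))) else 0) := by
  have hN0 : (0 : ℝ) < N := Nat.cast_pos.2 hN
  by_cases hna : (n : ℝ) + 1 < a
  · rw [if_pos hna, if_pos (show (n : ℝ) ≤ a - 1 by linarith)]
    rcases lt_or_ge n N with hnN | hnN
    · have hNphase := phase_sub_le_of_le_kappa hN0 hu hM0 hM hκ le_rfl hNa haκ
      have hdiv : M / κ ≤ M / a := div_le_div_of_nonneg_left hM0 (hN0.trans_le hNa) haκ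
      have hn1 : (n : ℝ) + 1 ≤ N := by exact_mod_cast hnN
      have hCn := hC (n + 1) ⟨by linarith [n.cast_nonneg (α := ℝ)], hn1⟩
      rw [if_pos hnN]
      calc exp (-phase u μ (n + 1)) ≤ exp (-phase u μ a) * exp C := by
            rw [← exp_add, exp_le_exp]
            linarith [mul_nonpos_of_nonpos_of_nonneg (sub_nonpos.2 hdiv) (sub_nonneg.2 hNa)]
        _ ≤ _ := mul_le_mul_of_nonneg_left (le_add_of_nonneg_right (exp_pos _).le)
            (exp_pos _).le
    · have hNn : (N : ℝ) ≤ n + 1 := by exact_mod_cast hnN.trans n.le_succ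
      have hsub := phase_sub_le_of_le_kappa hN0 hu hM0 hM hκ hNn hna.le haκ
      rw [if_neg (not_lt.2 hnN), zero_add, ← exp_add, exp_le_exp]
      linarith
  · rw [if_neg hna]
    exact mul_nonneg (exp_pos _).le (add_nonneg (by split_ifs <;> positivity)
      (by split_ifs <;> positivity))

lemma tsum_left_tail_le {N : ℕ} {C : ℝ}
    (hu : ∀ x, (N : ℝ) ≤ x → DifferentiableAt ℝ u x ∧ DifferentiableAt ℝ (deriv u) x)
    (hN : 0 < N) (hM0 : 0 < M) (hM : ∀ x, (N : ℝ) ≤ x → M ≤ x ^ 2 * deriv (deriv u) x)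
    (hκ : deriv u κ = -μ) (hC : ∀ t ∈ Icc 1 (N : ℝ), phase u μ N - phase u μ t ≤ C)
    (hNa : (N : ℝ) ≤ a) (haκ : a < κ) :
    ∑' n : ℕ, (if (n : ℝ) + 1 < a then exp (-phase u μ (n + 1)) else 0)
      ≤ (N * exp C + (1 + 1 / (M / a - M / κ))) * exp (-phase u μ a) := by
  have ha : 0 < a := (Nat.cast_pos.2 hN).trans_le hNa
  set c := M / a - M / κ
  have hc : 0 < c := sub_pos.2 (div_lt_div_of_pos_left hM0 ha haκ)
  have hsmall : Summable fun n : ℕ => if n < N then exp C else 0 :=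
    summable_ite_of_lt (b := N) fun n hn => by exact_mod_cast hn
  have hgeom : Summable fun n : ℕ => if (n : ℝ) ≤ a - 1 then exp (-(c * (a - 1 - n))) else 0 :=
    summable_ite_of_lt (b := a) fun n hn => by linarith
  calc _ ≤ ∑' n : ℕ, exp (-phase u μ a) * ((if n < N then exp C else 0)
        + if (n : ℝ) ≤ a - 1 then exp (-(c * (a - 1 - n))) else 0) :=
        (summable_ite_of_lt (b := a) fun n hn => by linarith).tsum_le_tsum
          (exp_neg_phase_ite_le_left hu hN hM0.le hM hκ hC hNa haκ.le)
          ((hsmall.add hgeom).mul_left _)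
    _ ≤ exp (-phase u μ a) * (N * exp C + (1 + 1 / c)) := by
        rw [tsum_mul_left, hsmall.tsum_add hgeom, tsum_ite_lt_const]
        exact mul_le_mul_of_nonneg_left (add_le_add_right (tsum_ite_le_exp_neg_mul_sub_le hc _) _)
          (exp_pos _).le
    _ = _ := mul_comm _ _

end FixedMu

lemma Spart_pos_and_Stot_le {u : ℝ → ℝ} {μ κ M a b ε C : ℝ} {N : ℕ}
    (hu : ∀ x, (N : ℝ) ≤ x → DifferentiableAt ℝ u x ∧ DifferentiableAt ℝ (deriv u) x)
    (hN : 0 < N) (hM0 : 0 < M) (hM : ∀ x, (N : ℝ) ≤ x → M ≤ x ^ 2 * deriv (deriv u) x)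
    (hκ : deriv u κ = -μ) (hC : ∀ t ∈ Icc 1 (N : ℝ), phase u μ N - phase u μ t ≤ C)
    (hNa : (N : ℝ) ≤ a) (haκ : a ≤ κ) (hκb : κ ≤ b) (hε : 0 < ε)
    (hleft : N * exp C + (1 + 1 / (M / a - M / κ)) ≤ ε * (κ - a - 2))
    (hright : 1 + 1 / (M / κ - M / b) ≤ ε * (b - κ - 2)) :
    0 < Spart u μ a b ∧ Spart u μ a b ≤ Stot u μ ∧ Stot u μ ≤ (1 + 2 * ε) * Spart u μ a b := by
  have hN0 : (0 : ℝ) < N := Nat.cast_pos.2 hN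
  have hκa : a + 2 < κ := by
    have hc : 0 ≤ 1 / (M / a - M / κ) := one_div_nonneg.2 (sub_nonneg.2
      (div_le_div_of_nonneg_left hM0.le (hN0.trans_le hNa) haκ))
    have hC0 : 0 ≤ N * exp C := mul_nonneg hN0.le (exp_pos C).le
    linarith [pos_of_mul_pos_right (by linarith : 0 < ε * (κ - a - 2)) hε.le]
  have hbκ : κ + 2 < b := by
    have hd : 0 ≤ 1 / (M / κ - M / b) := one_div_nonneg.2 (sub_nonneg.2
      (div_le_div_of_nonneg_left hM0.le (hN0.trans_le (hNa.trans haκ)) hκb))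
    linarith [pos_of_mul_pos_right (by linarith : 0 < ε * (b - κ - 2)) hε.le]
  have hwin_a := mul_exp_neg_phase_le_Spart_left hN0 hu hM0.le hM hκ hNa hκb
  have hwin_b := mul_exp_neg_phase_le_Spart_right (b := b) hN0 hu hM0.le hM hκ (hNa.trans haκ) haκ
  have htail_a := tsum_left_tail_le hu hN hM0 hM hκ hC hNa (by linarith : a < κ)
  obtain ⟨hsum_b, htail_b⟩ :=
    summable_right_tail_and_tsum_le hN0 hu hM0 hM hκ (hNa.trans haκ) (by linarith : κ < b)
  have hS : 0 < Spart u μ a b := (mul_pos (by linarith) (exp_pos _)).trans_le hwin_a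
  rw [Stot_eq_tsum_phase, tsum_eq_tail_add_window_add_tail (by linarith : a ≤ b) hsum_b,
    ← Spart_eq_tsum_phase]
  have htail_a0 : 0 ≤ ∑' n : ℕ, if (n : ℝ) + 1 < a then exp (-phase u μ (n + 1)) else 0 :=
    tsum_nonneg fun n => by split_ifs <;> positivity
  have htail_b0 : 0 ≤ ∑' n : ℕ, if b ≤ (n : ℝ) + 1 then exp (-phase u μ (n + 1)) else 0 :=
    tsum_nonneg fun n => by split_ifs <;> positivity
  refine ⟨hS, by linarith, ?_⟩
  have hsmall_a : (N * exp C + (1 + 1 / (M / a - M / κ))) * exp (-phase u μ a)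
      ≤ ε * Spart u μ a b := by
    calc _ ≤ ε * (κ - a - 2) * exp (-phase u μ a) :=
          mul_le_mul_of_nonneg_right hleft (exp_pos _).le
      _ ≤ ε * Spart u μ a b := by rw [mul_assoc]; exact mul_le_mul_of_nonneg_left hwin_a hε.le
  have hsmall_b : (1 + 1 / (M / κ - M / b)) * exp (-phase u μ b) ≤ ε * Spart u μ a b := by
    calc _ ≤ ε * (b - κ - 2) * exp (-phase u μ b) :=
          mul_le_mul_of_nonneg_right hright (exp_pos _).le
      _ ≤ ε * Spart u μ a b := by rw [mul_assoc]; exact mul_le_mul_of_nonneg_left hwin_b hε.le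
  linarith

lemma exists_phase_sub_le {u : ℝ → ℝ} {R : ℝ} (hu : ContinuousOn u (Icc 1 R)) (μ₀ : ℝ) :
    ∃ C, ∀ μ ≤ μ₀, ∀ t ∈ Icc 1 R, phase u μ R - phase u μ t ≤ C := by
  have hcont : ContinuousOn (fun t => phase u μ₀ R - phase u μ₀ t) (Icc 1 R) :=
    continuousOn_const.sub ((continuousOn_const.mul continuousOn_id).add hu)
  obtain ⟨C, hC⟩ := isCompact_Icc.bddAbove_image hcont
  refine ⟨C, fun μ hμ t ht => ?_⟩
  have hμ₀ := hC ⟨t, ht, rfl⟩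
  have hmul : μ * (R - t) ≤ μ₀ * (R - t) := mul_le_mul_of_nonneg_right hμ (sub_nonneg.2 ht.2)
  simp only [phase] at hμ₀ ⊢
  linarith

lemma eventually_le_mul_sub_two (K : ℝ) {M ε s t : ℝ} (hs : 0 < s) (hst : s < t) (hε : 0 < ε)
    (hM : s * t / (ε * (t - s) ^ 2) < M) :
    ∀ᶠ κ in atTop, K + 1 / (M / (κ * s) - M / (κ * t)) ≤ ε * (κ * t - κ * s - 2) := by
  have hts : 0 < t - s := sub_pos.2 hst
  have hM0 : 0 < M := lt_of_le_of_lt (div_nonneg (mul_pos hs (hs.trans hst)).le (by positivity)) hM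
  set B := s * t / (M * (t - s))
  have hB : B < ε * (t - s) := by
    rw [div_lt_iff₀ (by positivity)] at hM ⊢
    linarith
  filter_upwards [eventually_gt_atTop 0, eventually_ge_atTop ((K + 2 * ε) / (ε * (t - s) - B))]
    with κ hκ hκK
  have hinv : 1 / (M / (κ * s) - M / (κ * t)) = B * κ := by
    have ht : t ≠ 0 := (hs.trans hst).ne'
    have hden : M / (κ * s) - M / (κ * t) = M * (t - s) / (κ * (s * t)) := by
      field_simp
    rw [hden, one_div_div]
    ring
  rw [div_le_iff₀ (sub_pos.2 hB)] at hκK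
  rw [hinv]
  linarith

lemma eventually_gt_muDownTo (μstar : EReal) : ∀ᶠ μ : ℝ in muDownTo μstar, μstar < μ :=
  preimage_mem_comap self_mem_nhdsWithin

lemma eventually_lt_muDownTo {μstar y : EReal} (h : μstar < y) :
    ∀ᶠ μ : ℝ in muDownTo μstar, (μ : EReal) < y :=
  preimage_mem_comap (nhdsWithin_le_nhds (Iio_mem_nhds h))

lemma exists_eventually_lt_muDownTo (μstar : EReal) :
    ∃ μ₀ : ℝ, ∀ᶠ μ in muDownTo μstar, μ < μ₀ := by
  rcases eq_or_ne μstar ⊤ with rfl | h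
  · refine ⟨0, ?_⟩
    rw [muDownTo, Ioi_top, nhdsWithin_empty, comap_bot]
    exact eventually_bot
  · obtain ⟨μ₀, h₀, -⟩ := EReal.exists_between_coe_real (lt_top_iff_ne_top.2 h)
    exact ⟨μ₀, (eventually_lt_muDownTo h₀).mono fun μ hμ => EReal.coe_lt_coe_iff.1 hμ⟩

lemma tendsto_muDownTo_atTop {f κ : ℝ → ℝ} {μstar : EReal} {R : ℝ} (hR : 0 < R)
    (hf : ContinuousOn f (Ici R)) (hmono : StrictMonoOn f (Ici R))
    (hlim : Tendsto (fun x => (f x : EReal)) atTop (𝓝 (-μstar)))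
    (hκ : ∀ μ : ℝ, μstar < μ → ∀ y, 0 < y → f y = -μ → y ≤ κ μ) :
    Tendsto κ (muDownTo μstar) atTop := by
  refine tendsto_atTop.2 fun X => ?_
  set x₁ := max X R
  have hRx₁ : R ≤ x₁ := le_max_right _ _
  have hfx₁ : (f x₁ : EReal) < -μstar := by
    have hle : (f (x₁ + 1) : EReal) ≤ -μstar :=
      ge_of_tendsto hlim ((eventually_ge_atTop (x₁ + 1)).mono fun y hy => EReal.coe_le_coe_iff.2
        (hmono.monotoneOn (by simp only [mem_Ici]; linarith) (by simp only [mem_Ici]; linarith) hy))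
    exact (EReal.coe_lt_coe_iff.2 (hmono hRx₁ (by simp only [mem_Ici]; linarith)
      (by linarith))).trans_le hle
  filter_upwards [eventually_gt_muDownTo μstar, eventually_lt_muDownTo
    (EReal.lt_neg_of_lt_neg hfx₁)] with μ hμ hμx₁
  have hx₁μ : f x₁ ≤ -μ := by
    have := EReal.coe_lt_coe_iff.1 (hμx₁ : (μ : EReal) < ((-f x₁ : ℝ) : EReal))
    linarith
  have hμlim : ((-μ : ℝ) : EReal) < -μstar := by
    rw [EReal.coe_neg, EReal.neg_lt_neg_iff]
    exact hμ
  obtain ⟨x₂, hx₂, hx₁₂⟩ := ((hlim.eventually_const_lt hμlim).and (eventually_ge_atTop x₁)).exists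
  obtain ⟨y, hy, hfy⟩ := intermediate_value_Icc hx₁₂
    (hf.mono (Icc_subset_Ici_self.trans (Ici_subset_Ici.2 hRx₁)))
    ⟨hx₁μ, (EReal.coe_lt_coe_iff.1 hx₂).le⟩
  exact (le_max_left X R).trans (hy.1.trans (hκ μ hμ y (by linarith [hy.1]) hfy))

lemma tendsto_kappa_atTop {u κ : ℝ → ℝ} {μstar : EReal}
    (hu : ∀ x ∈ Ioi (0 : ℝ), DifferentiableAt ℝ (deriv u) x)
    (hlim : Tendsto (fun x => x ^ 2 * deriv (deriv u) x) atTop atTop)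
    (hmustar : Tendsto (fun x => ((deriv u x : ℝ) : EReal)) atTop (𝓝 (-μstar)))
    (hκ : ∀ μ : ℝ, μstar < μ → ∀ y, 0 < y → deriv u y = -μ → y ≤ κ μ) :
    Tendsto κ (muDownTo μstar) atTop := by
  obtain ⟨N, hN, hpos⟩ := exists_pos_nat_forall_ge_of_eventually (hlim.eventually_gt_atTop 0)
  have hN0 : (0 : ℝ) < N := Nat.cast_pos.2 hN
  have hcont : ContinuousOn (deriv u) (Ici (N : ℝ)) :=
    fun x hx => (hu x (hN0.trans_le hx)).continuousAt.continuousWithinAt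
  refine tendsto_muDownTo_atTop hN0 hcont (strictMonoOn_of_deriv_pos (convex_Ici _) hcont
    fun x hx => ?_) hmustar hκ
  rw [interior_Ici] at hx
  exact pos_of_mul_pos_right (hpos x hx.le) (sq_nonneg x)

/-- Step-function concentration: if `x² u''(x) → ∞`, `μ⋆ = -lim u'`, and `κ(μ)` is the
largest solution of `u'(κ) = -μ`, then for `0 < λ₁ < 1 < λ₂` the sum `S_μ`
concentrates on `[κλ₁, κλ₂)` as `μ ↓ μ⋆`. -/
theorem S_concentrates_near_kappa
    (u : ℝ → ℝ) (μstar : EReal) (κ : ℝ → ℝ) (lam1 lam2 : ℝ)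
    (hlam1 : 0 < lam1) (hlam1' : lam1 < 1) (hlam2 : 1 < lam2)
    (hdiff : ∀ x ∈ Set.Ioi (0:ℝ),
      DifferentiableAt ℝ u x ∧ DifferentiableAt ℝ (deriv u) x)
    (hlim : Tendsto (fun x => x ^ 2 * deriv (deriv u) x) atTop atTop)
    (hmustar : Tendsto (fun x => ((deriv u x : ℝ) : EReal)) atTop (nhds (-μstar)))
    (hκ : ∀ μ : ℝ, μstar < (μ : EReal) →
      deriv u (κ μ) = -μ ∧ ∀ y : ℝ, 0 < y → deriv u y = -μ → y ≤ κ μ) :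
    Tendsto (fun μ : ℝ => Spart u μ (κ μ * lam1) (κ μ * lam2) / Stot u μ)
      (muDownTo μstar) (nhds 1) := by
  obtain ⟨μ₀, hμ₀⟩ := exists_eventually_lt_muDownTo μstar
  have hκ_top := tendsto_kappa_atTop (fun x hx => (hdiff x hx).2) hlim hmustar
    fun μ hμ => (hκ μ hμ).2
  refine Metric.tendsto_nhds.2 fun ε hε => ?_
  obtain ⟨M, hM₁, hM₂, hM₀⟩ := ((eventually_gt_atTop (lam1 * 1 / (ε / 4 * (1 - lam1) ^ 2))).and
    ((eventually_gt_atTop (1 * lam2 / (ε / 4 * (lam2 - 1) ^ 2))).and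
      (eventually_gt_atTop 0))).exists
  obtain ⟨N, hN, hNM⟩ := exists_pos_nat_forall_ge_of_eventually (hlim.eventually_ge_atTop M)
  have hN0 : (0 : ℝ) < N := Nat.cast_pos.2 hN
  obtain ⟨C, hC⟩ := exists_phase_sub_le (R := N)
    (fun x hx => (hdiff x (zero_lt_one.trans_le hx.1)).1.continuousAt.continuousWithinAt) μ₀
  filter_upwards [eventually_gt_muDownTo μstar, hμ₀, hκ_top.eventually
    ((eventually_le_mul_sub_two (N * exp C + 1) hlam1 hlam1' (by positivity) hM₁).and
      ((eventually_le_mul_sub_two 1 one_pos hlam2 (by positivity) hM₂).and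
        (eventually_ge_atTop (N / lam1))))] with μ hμ hμμ₀ ⟨hleft, hright, hNκ⟩
  simp only [mul_one] at hleft hright
  have hNa : (N : ℝ) ≤ κ μ * lam1 := (div_le_iff₀ hlam1).1 hNκ
  have hκ0 : 0 < κ μ := (div_pos hN0 hlam1).trans_le hNκ
  obtain ⟨hS, hST, hT⟩ := Spart_pos_and_Stot_le (fun x hx => hdiff x (hN0.trans_le hx)) hN hM₀
    hNM (hκ μ hμ).1 (hC μ hμμ₀.le) hNa (mul_le_of_le_one_right hκ0.le hlam1'.le)
    (le_mul_of_one_le_right hκ0.le hlam2.le) (by positivity) (by linarith) hright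
  exact (dist_div_one_le hS hST hT).trans_lt (by linarith)
end

section
/- Let $u$ be twice differentiable with $u''(x)\to c \in (0,\infty)$ as $x\to\infty$, $\varkappa = \varkappa(\mu)$ the largest solution of $u'(\varkappa)=-\mu$, and $S_\mu(a) = \sum_{k\ge a} e^{-\mu k - u(k)}$. Then for each real $x$, $\lim_{\mu\downarrow\mu_*} e^{u(\varkappa)+\mu\varkappa} S_\mu(\varkappa + x) = \sum_{k \ge x,\, k\in\mathbb{Z}} e^{-c k^2/2}$, where the sum on the right is over integers $k \ge x$ after identifying $k$ with the shift $k - \varkappa$ (valid along sequences of $\mu$ for which $\varkappa(\mu)$ is an integer). -/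
/-!
Writing `k = κ + j`, the normalised tail becomes `∑_{j ≥ x} e^{-R(κ, j)}` with
`R(κ, j) = u(κ + j) - u(κ) - u'(κ) j`, because `μ = -u'(κ)`. Once `u'' ≥ d` beyond some point,
`u - d y²/2` is convex there, so its tangent line at `κ` gives `R(κ, j) ≥ d j²/2`; likewise
from above. Hence `R(κ, j) → c j²/2` for each `j`, and `e^{-c j²/4}` dominates the terms
uniformly for large `κ`, so Tannery's theorem passes to the limit.
-/

open Filter Set

/-- `S_μ(a) = ∑_{k ≥ a, k ≥ 1} e^{-μ k - u(k)}`. -/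
noncomputable def Stail (u : ℝ → ℝ) (μ a : ℝ) : ℝ :=
  ∑' k : ℕ, if a ≤ (k : ℝ) + 1 then
    Real.exp (-(μ * ((k : ℝ) + 1)) - u ((k : ℝ) + 1)) else 0

open Real Topology

theorem ConvexOn.add_mul_sub_le_of_hasDerivAt {S : Set ℝ} {f : ℝ → ℝ} {f' x y : ℝ}
    (hf : ConvexOn ℝ S f) (hx : x ∈ S) (hy : y ∈ S) (hf' : HasDerivAt f f' x) :
    f x + f' * (y - x) ≤ f y := by
  rcases lt_trichotomy x y with hxy | rfl | hxy
  · have := hf.le_slope_of_hasDerivAt hx hy hxy hf'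
    rw [slope_def_field, le_div_iff₀ (sub_pos.2 hxy)] at this
    linarith
  · simp
  · have := hf.slope_le_of_hasDerivAt hy hx hxy hf'
    rw [slope_def_field, div_le_iff₀ (sub_pos.2 hxy)] at this
    linarith

theorem summable_exp_neg_mul_sq_int {a : ℝ} (ha : 0 < a) :
    Summable fun n : ℤ => exp (-a * n ^ 2) := by
  refine (summable_pow_mul_jacobiTheta₂_term_bound 0 (div_pos ha pi_pos) 0).congr fun n => ?_
  simp only [pow_zero, one_mul, mul_zero, zero_mul, sub_zero]
  congr 1
  field_simp

section Taylor

variable {u u' u'' : ℝ → ℝ} {M a h : ℝ}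

theorem taylor_remainder_ge_of_le_deriv2 (hu : ∀ y > M, HasDerivAt u (u' y) y)
    (hu' : ∀ y > M, HasDerivAt u' (u'' y) y) {d : ℝ} (hd : ∀ y > M, d ≤ u'' y)
    (ha : M < a) (hah : M < a + h) :
    d * h ^ 2 / 2 ≤ u (a + h) - u a - u' a * h := by
  have hsq : ∀ y, HasDerivAt (fun y => d * y ^ 2 / 2) (d * y) y := fun y => by
    exact (((hasDerivAt_pow 2 y).const_mul d).div_const 2).congr_deriv (by ring)
  have hconv : ConvexOn ℝ (Ioi M) fun y => u y - d * y ^ 2 / 2 := by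
    refine convexOn_of_hasDerivWithinAt2_nonneg (convex_Ioi M) (f' := fun y => u' y - d * y)
      (f'' := fun y => u'' y - d) (fun y hy => ?_) (fun y hy => ?_) (fun y hy => ?_)
      (fun y hy => ?_) <;> simp only [interior_Ioi, mem_Ioi] at hy ⊢
    · exact ((hu y hy).sub (hsq y)).continuousAt.continuousWithinAt
    · exact ((hu y hy).sub (hsq y)).hasDerivWithinAt
    · exact ((hu' y hy).sub (((hasDerivAt_id y).const_mul d).congr_deriv (mul_one d))).hasDerivWithinAt
    · exact sub_nonneg.2 (hd y hy)
  have := hconv.add_mul_sub_le_of_hasDerivAt ha hah ((hu a ha).sub (hsq a))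
  linear_combination this

theorem taylor_remainder_le_of_deriv2_le (hu : ∀ y > M, HasDerivAt u (u' y) y)
    (hu' : ∀ y > M, HasDerivAt u' (u'' y) y) {D : ℝ} (hD : ∀ y > M, u'' y ≤ D)
    (ha : M < a) (hah : M < a + h) :
    u (a + h) - u a - u' a * h ≤ D * h ^ 2 / 2 := by
  have := taylor_remainder_ge_of_le_deriv2 (u := fun y => -u y) (u' := fun y => -u' y)
    (u'' := fun y => -u'' y) (d := -D) (fun y hy => (hu y hy).neg) (fun y hy => (hu' y hy).neg)
    (fun y hy => neg_le_neg (hD y hy)) ha hah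
  linarith

variable {ι : Type*} {l : Filter ι} {K : ι → ℝ} {c : ℝ}

theorem tendsto_taylor_remainder (hu : ∀ᶠ y in atTop, HasDerivAt u (u' y) y)
    (hu' : ∀ᶠ y in atTop, HasDerivAt u' (u'' y) y) (hu'' : Tendsto u'' atTop (𝓝 c))
    (hK : Tendsto K l atTop) (h : ℝ) :
    Tendsto (fun i => u (K i + h) - u (K i) - u' (K i) * h) l (𝓝 (c * h ^ 2 / 2)) := by
  rw [Metric.tendsto_nhds]
  intro ε hε
  set δ := ε / (h ^ 2 + 1)
  have hδ : δ * (h ^ 2 + 1) = ε := div_mul_cancel₀ ε (by positivity)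
  obtain ⟨M, hM⟩ := eventually_atTop.1
    (hu.and (hu'.and (Metric.tendsto_nhds.1 hu'' δ (by positivity))))
  filter_upwards [hK.eventually_ge_atTop (M + |h| + 1)] with i hi
  have hM' : ∀ y > M, |u'' y - c| < δ := fun y hy => (hM y hy.le).2.2
  have hKi : M < K i := by linarith [abs_nonneg h]
  have hKih : M < K i + h := by linarith [neg_abs_le h]
  have hlo := taylor_remainder_ge_of_le_deriv2 (fun y hy => (hM y hy.le).1)
    (fun y hy => (hM y hy.le).2.1) (d := c - δ) (fun y hy => by linarith [abs_lt.1 (hM' y hy)])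
    hKi hKih
  have hhi := taylor_remainder_le_of_deriv2_le (fun y hy => (hM y hy.le).1)
    (fun y hy => (hM y hy.le).2.1) (D := c + δ) (fun y hy => by linarith [abs_lt.1 (hM' y hy)])
    hKi hKih
  rw [Real.dist_eq, abs_lt]
  constructor <;> nlinarith [sq_nonneg h]

theorem eventually_taylor_remainder_ge (hc : 0 < c) (hu : ∀ᶠ y in atTop, HasDerivAt u (u' y) y)
    (hu' : ∀ᶠ y in atTop, HasDerivAt u' (u'' y) y) (hu'' : Tendsto u'' atTop (𝓝 c))
    (hK : Tendsto K l atTop) (x : ℝ) :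
    ∀ᶠ i in l, ∀ h ≥ x, c / 4 * h ^ 2 ≤ u (K i + h) - u (K i) - u' (K i) * h := by
  obtain ⟨M, hM⟩ := eventually_atTop.1
    (hu.and (hu'.and (hu''.eventually (le_mem_nhds (half_lt_self hc)))))
  filter_upwards [hK.eventually_gt_atTop (M + |x|)] with i hi h hh
  have := taylor_remainder_ge_of_le_deriv2 (fun y hy => (hM y hy.le).1)
    (fun y hy => (hM y hy.le).2.1) (fun y hy => (hM y hy.le).2.2)
    (by linarith [abs_nonneg x] : M < K i) (by linarith [neg_abs_le x] : M < K i + h)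
  linarith

end Taylor

theorem exp_mul_Stail_eq_tsum (u : ℝ → ℝ) (μ x : ℝ) (m : ℕ) :
    exp (u m + μ * m) * Stail u μ (m + x) =
      ∑' j : ℤ, if x ≤ j ∧ 1 ≤ (m : ℝ) + j then exp (-(u (m + j) - u m + μ * j)) else 0 := by
  rw [Stail, ← tsum_mul_left]
  have hinj : Function.Injective fun k : ℕ => (k : ℤ) + 1 - m := fun a b hab => by simpa using hab
  rw [← hinj.tsum_eq fun j hj => ?_]
  · refine tsum_congr fun k => ?_
    push_cast
    rw [add_sub_cancel]
    by_cases hk : (m : ℝ) + x ≤ k + 1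
    · rw [if_pos hk, if_pos ⟨by linarith, by linarith⟩, ← exp_add]
      ring_nf
    · rw [if_neg hk, if_neg fun h => hk (by linarith [h.1]), mul_zero]
  · obtain ⟨-, hj⟩ : x ≤ j ∧ 1 ≤ (m : ℝ) + j := by
      by_contra h
      exact hj (if_neg h)
    have hj : 1 ≤ (m : ℤ) + j := by exact_mod_cast hj
    exact ⟨(j + m - 1).toNat, by simp only; omega⟩

/-- Discrete Gaussian local profile: if `u''(x) → c ∈ (0,∞)` and `κ(μ)` solves
`u'(κ) = -μ`, then along a sequence of `μ` for which `κ(μ)` is a positive integer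
tending to `∞`, `e^{u(κ)+μκ} S_μ(κ + x) → ∑_{k ∈ ℤ, k ≥ x} e^{-c k²/2}`. -/
theorem discrete_gaussian_local_profile
    (u : ℝ → ℝ) (c : ℝ) (hc : 0 < c)
    (hdiff : ∀ y ∈ Set.Ioi (0:ℝ),
      DifferentiableAt ℝ u y ∧ DifferentiableAt ℝ (deriv u) y)
    (hu'' : Tendsto (fun y => deriv (deriv u) y) atTop (nhds c))
    (κ : ℝ → ℝ) (μseq : ℕ → ℝ)
    (hκ : ∀ n, deriv u (κ (μseq n)) = -(μseq n) ∧
      ∀ y : ℝ, 0 < y → deriv u y = -(μseq n) → y ≤ κ (μseq n))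
    (hint : ∀ n, ∃ m : ℕ, 0 < m ∧ (κ (μseq n) : ℝ) = m)
    (hκtop : Tendsto (fun n => κ (μseq n)) atTop atTop)
    (x : ℝ) :
    Tendsto
      (fun n => Real.exp (u (κ (μseq n)) + μseq n * κ (μseq n)) *
        Stail u (μseq n) (κ (μseq n) + x))
      atTop
      (nhds (∑' k : ℤ, if x ≤ (k : ℝ) then Real.exp (-(c * (k : ℝ) ^ 2) / 2) else 0)) := by
  have hu : ∀ᶠ y in atTop, HasDerivAt u (deriv u y) y :=
    (eventually_gt_atTop 0).mono fun y hy => (hdiff y hy).1.hasDerivAt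
  have hu' : ∀ᶠ y in atTop, HasDerivAt (deriv u) (deriv (deriv u) y) y :=
    (eventually_gt_atTop 0).mono fun y hy => (hdiff y hy).2.hasDerivAt
  have hshift : ∀ n, exp (u (κ (μseq n)) + μseq n * κ (μseq n)) *
      Stail u (μseq n) (κ (μseq n) + x) = ∑' j : ℤ, if x ≤ j ∧ 1 ≤ κ (μseq n) + j then
        exp (-(u (κ (μseq n) + j) - u (κ (μseq n)) - deriv u (κ (μseq n)) * j)) else 0 := by
    intro n
    obtain ⟨m, -, hm⟩ := hint n
    have hμ : μseq n = -deriv u m := by rw [← hm, (hκ n).1, neg_neg]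
    rw [hm, exp_mul_Stail_eq_tsum, hμ]
    simp only [neg_mul, ← sub_eq_add_neg]
  refine Tendsto.congr (fun n => (hshift n).symm) (tendsto_tsum_of_dominated_convergence
    (bound := fun j : ℤ => exp (-(c / 4) * j ^ 2)) (summable_exp_neg_mul_sq_int (by positivity))
    (fun j => ?_) ?_)
  · by_cases hx : x ≤ j
    · rw [if_pos hx, neg_div]
      refine Tendsto.congr' ?_ ((continuous_exp.tendsto _).comp
        (tendsto_taylor_remainder hu hu' hu'' hκtop j).neg)
      filter_upwards [hκtop.eventually_ge_atTop (1 - j)] with n hn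
      rw [if_pos ⟨hx, by linarith⟩]
      rfl
    · simp only [hx, false_and, if_false, tendsto_const_nhds]
  · filter_upwards [eventually_taylor_remainder_ge hc hu hu' hu'' hκtop x] with n hn j
    split_ifs with hj
    · rw [norm_of_nonneg (exp_pos _).le, exp_le_exp]
      linarith [hn j hj.1]
    · simpa using (exp_pos _).le
end

section
/- Let $f:(0,\infty)\to(0,\infty)$ be non-increasing with $\lim_{x\to\infty} x^2 f(x) = \infty$. Then there exist sequences $\varepsilon_n \downarrow 0$ and $x_k \uparrow \infty$ such that: (i) $\varepsilon_k x_k \sqrt{f(x_k)} \to \infty$; (ii) $\limsup_{k\to\infty} f(x_k - \varepsilon_k x_k)/f(x_k) = 1$; (iii) $\lim_{n\to\infty} \liminf_{k\to\infty} f(x_k + \varepsilon_n x_k)/f(x_k) = 1$. -/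
/-!
Put `G t = -log f(eᵗ)`: it is non-decreasing and `2t - G t → ∞`, so there are windows `[T, T']`,
arbitrarily far out, over which `G` increases by less than `2 (T' - T)`. Since
`∫_T^{T'} (G(t + a) - G(t - a)) dt ≤ 2a · (increment of G)`, Markov's inequality bounds the
measure of the points of the window where `G(t + aₘ) - G(t - aₘ) ≥ cₘ` by `2aₘ/cₘ` times the
increment. With `aₘ = 8^{-(m+1)}` and `cₘ = 4^{-m}` these ratios sum to at most `1/2`, so some
point `t` of the window satisfies `G(t + aₘ) - G(t - aₘ) < cₘ` at every scale `m ≤ M`. Taking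
such points `t_k ↑ ∞` with `M = k`, `x_k = e^{t_k}` and `ε_k = 1 - e^{-a_k}`, the ratios in (ii)
and (iii) are squeezed between `1` and `e^{±cₘ}`, and (i) is arranged by taking each `t_k` large.
-/

open Filter Set MeasureTheory intervalIntegral Topology Real

def centralDiff (G : ℝ → ℝ) (a t : ℝ) : ℝ := G (t + a) - G (t - a)

section CentralDiff

variable {G : ℝ → ℝ}

theorem Monotone.centralDiff_nonneg (hG : Monotone G) {a : ℝ} (ha : 0 ≤ a) (t : ℝ) :
    0 ≤ centralDiff G a t :=
  sub_nonneg.2 (hG (by linarith))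

theorem Monotone.intervalIntegrable_comp_add (hG : Monotone G) (d T T' : ℝ) :
    IntervalIntegrable (fun t => G (t + d)) volume T T' :=
  Monotone.intervalIntegrable fun _ _ h => hG (by linarith)

theorem Monotone.intervalIntegrable_comp_sub (hG : Monotone G) (d T T' : ℝ) :
    IntervalIntegrable (fun t => G (t - d)) volume T T' :=
  Monotone.intervalIntegrable fun _ _ h => hG (by linarith)

theorem Monotone.integral_centralDiff_le (hG : Monotone G) {a : ℝ} (ha : 0 ≤ a) (T T' : ℝ) :
    ∫ t in T..T', centralDiff G a t ≤ 2 * a * (G (T' + a) - G (T - a)) := by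
  have hi : ∀ u v, IntervalIntegrable G volume u v := fun _ _ => hG.intervalIntegrable
  have htelescope : ∫ t in T..T', centralDiff G a t
      = (∫ t in T' - a..T' + a, G t) - ∫ t in T - a..T + a, G t := by
    simp only [centralDiff]
    rw [integral_sub (hG.intervalIntegrable_comp_add _ _ _) (hG.intervalIntegrable_comp_sub _ _ _),
      integral_comp_add_right, integral_comp_sub_right]
    exact integral_interval_sub_interval_comm' (hi _ _) (hi _ _) (hi _ _)
  have hupper : ∫ t in T' - a..T' + a, G t ≤ 2 * a * G (T' + a) :=
    calc _ ≤ ∫ _ in T' - a..T' + a, G (T' + a) :=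
          integral_mono_on (by linarith) (hi _ _) intervalIntegrable_const fun t ht => hG ht.2
      _ = 2 * a * G (T' + a) := by rw [intervalIntegral.integral_const, smul_eq_mul]; ring
  have hlower : 2 * a * G (T - a) ≤ ∫ t in T - a..T + a, G t :=
    calc 2 * a * G (T - a) = ∫ _ in T - a..T + a, G (T - a) := by
          rw [intervalIntegral.integral_const, smul_eq_mul]; ring
      _ ≤ _ := integral_mono_on (by linarith) intervalIntegrable_const (hi _ _) fun t ht => hG ht.1
  rw [htelescope]
  linarith

theorem Monotone.mul_measureReal_le_centralDiff_le (hG : Monotone G) {a : ℝ} (ha : 0 ≤ a)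
    {T T' : ℝ} (hTT' : T ≤ T') (c : ℝ) :
    c * (volume.restrict (Icc T T')).real {t | c ≤ centralDiff G a t}
      ≤ 2 * a * (G (T' + a) - G (T - a)) :=
  calc _ ≤ ∫ t in Icc T T', centralDiff G a t :=
        mul_meas_ge_le_integral_of_nonneg (ae_of_all _ (hG.centralDiff_nonneg ha))
          ((intervalIntegrable_iff_integrableOn_Icc_of_le hTT').1
            ((hG.intervalIntegrable_comp_add a T T').sub (hG.intervalIntegrable_comp_sub a T T'))) c
    _ = ∫ t in T..T', centralDiff G a t := by
        rw [integral_of_le hTT', integral_Icc_eq_integral_Ioc]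
    _ ≤ _ := hG.integral_centralDiff_le ha T T'

theorem Monotone.exists_mem_Icc_forall_centralDiff_lt (hG : Monotone G) {ι : Type*}
    (s : Finset ι) {a c : ι → ℝ} (ha₀ : ∀ i, 0 ≤ a i) (ha₁ : ∀ i, a i ≤ 1) (hc : ∀ i, 0 < c i)
    {T T' : ℝ} (hTT' : T ≤ T')
    (hsmall : (∑ i ∈ s, 2 * a i / c i) * (G (T' + 1) - G (T - 1)) < T' - T) :
    ∃ t ∈ Icc T T', ∀ i ∈ s, centralDiff G (a i) t < c i := by
  by_contra! hbad
  set μ := volume.restrict (Icc T T')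
  set Δ := G (T' + 1) - G (T - 1)
  have hcover : Icc T T' ⊆ ⋃ i ∈ s, {t | c i ≤ centralDiff G (a i) t} := fun t ht => by
    obtain ⟨i, hi, hle⟩ := hbad t ht
    exact mem_biUnion hi hle
  have hbound : ∀ i ∈ s, μ.real {t | c i ≤ centralDiff G (a i) t} ≤ 2 * a i / c i * Δ := by
    intro i _
    have hΔ : G (T' + a i) - G (T - a i) ≤ Δ :=
      sub_le_sub (hG (by linarith [ha₁ i])) (hG (by linarith [ha₁ i]))
    rw [div_mul_eq_mul_div, le_div_iff₀ (hc i), mul_comm]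
    exact (hG.mul_measureReal_le_centralDiff_le (ha₀ i) hTT' (c i)).trans
      (mul_le_mul_of_nonneg_left hΔ (mul_nonneg zero_le_two (ha₀ i)))
  have hcovered : T' - T ≤ (∑ i ∈ s, 2 * a i / c i) * Δ :=
    calc T' - T = μ.real (Icc T T') := by
          rw [measureReal_restrict_apply_self, Real.volume_real_Icc_of_le hTT']
      _ ≤ μ.real (⋃ i ∈ s, {t | c i ≤ centralDiff G (a i) t}) :=
          measureReal_mono hcover (measure_ne_top _ _)
      _ ≤ ∑ i ∈ s, μ.real {t | c i ≤ centralDiff G (a i) t} := measureReal_biUnion_finset_le _ _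
      _ ≤ ∑ i ∈ s, 2 * a i / c i * Δ := Finset.sum_le_sum hbound
      _ = (∑ i ∈ s, 2 * a i / c i) * Δ := (Finset.sum_mul _ _ _).symm
  linarith

theorem Monotone.frequently_forall_centralDiff_lt (hG : Monotone G)
    (hgrowth : Tendsto (fun t => 2 * t - G t) atTop atTop) {a c : ℕ → ℝ}
    (ha₀ : ∀ m, 0 ≤ a m) (ha₁ : ∀ m, a m ≤ 1) (hc : ∀ m, 0 < c m)
    (hsum : ∀ M, ∑ m ∈ Finset.range M, 2 * a m / c m ≤ 1 / 2) (M : ℕ) :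
    ∃ᶠ t in atTop, ∀ m < M, centralDiff G (a m) t < c m := by
  refine frequently_atTop.2 fun T => ?_
  obtain ⟨T₁, hT₁⟩ := (tendsto_atTop.1 hgrowth (2 * T + 3 - G (T - 1))).exists_forall_of_atTop
  set T' := max (T + 1) T₁
  have hT' : T + 1 ≤ T' := le_max_left _ _
  -- `2T + 3 - G (T - 1)` is chosen so that at `T' + 1` the increment of `G` over
  -- `[T - 1, T' + 1]` is at most `2 (T' - T) - 1`
  have hgap : G (T' + 1) - G (T - 1) < 2 * (T' - T) := by
    linarith [hT₁ (T' + 1) (by linarith [le_max_right (T + 1) T₁])]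
  have hΔ : 0 ≤ G (T' + 1) - G (T - 1) := sub_nonneg.2 (hG (by linarith))
  have hsmall : (∑ m ∈ Finset.range M, 2 * a m / c m) * (G (T' + 1) - G (T - 1)) < T' - T := by
    nlinarith [mul_le_mul_of_nonneg_right (hsum M) hΔ]
  obtain ⟨t, ht, hgood⟩ :=
    hG.exists_mem_Icc_forall_centralDiff_lt _ ha₀ ha₁ hc (by linarith) hsmall
  exact ⟨t, ht.1, fun m hm => hgood m (Finset.mem_range.2 hm)⟩

end CentralDiff

theorem exists_monotone_forall_of_frequently {α : Type*} [Preorder α] [IsDirectedOrder α]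
    [Nonempty α] {P : ℕ → α → Prop} (h : ∀ k, ∃ᶠ x in atTop, P k x) :
    ∃ x : ℕ → α, Monotone x ∧ ∀ k, P k (x k) := by
  choose g hg_ge hg using fun k => frequently_atTop.1 (h k)
  let x : ℕ → α := fun k => Nat.rec (g 0 (Classical.arbitrary α)) (fun k xk => g (k + 1) xk) k
  refine ⟨x, monotone_nat_of_le_succ fun k => hg_ge (k + 1) (x k), fun k => ?_⟩
  cases k with
  | zero => exact hg 0 _
  | succ k => exact hg (k + 1) (x k)

theorem Filter.liminf_mem_Icc_of_eventually_mem {ι : Type*} {l : Filter ι} [l.NeBot]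
    {u : ι → ℝ} {a b : ℝ} (h : ∀ᶠ i in l, u i ∈ Icc a b) : liminf u l ∈ Icc a b :=
  ⟨le_liminf_of_le (isBoundedUnder_of_eventually_le (h.mono fun _ hi => hi.2)).isCoboundedUnder_ge
      (h.mono fun _ hi => hi.1),
    liminf_le_of_frequently_le (h.mono fun _ hi => hi.2).frequently
      (isBoundedUnder_of_eventually_ge (h.mono fun _ hi => hi.1))⟩

noncomputable def logProfile (f : ℝ → ℝ) (t : ℝ) : ℝ := -log (f (exp t))

section LogProfile

variable {f : ℝ → ℝ}

theorem logProfile_monotone (hpos : ∀ x ∈ Ioi (0 : ℝ), 0 < f x)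
    (hanti : ∀ x y : ℝ, 0 < x → x ≤ y → f y ≤ f x) : Monotone (logProfile f) := fun s t hst =>
  neg_le_neg <| log_le_log (hpos _ (exp_pos t)) (hanti _ _ (exp_pos s) (exp_le_exp.2 hst))

theorem tendsto_two_mul_sub_logProfile (hpos : ∀ x ∈ Ioi (0 : ℝ), 0 < f x)
    (hlim : Tendsto (fun x => x ^ 2 * f x) atTop atTop) :
    Tendsto (fun t => 2 * t - logProfile f t) atTop atTop := by
  refine (tendsto_log_atTop.comp (hlim.comp tendsto_exp_atTop)).congr fun t => ?_
  simp only [Function.comp_apply, logProfile]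
  rw [log_mul (by positivity) (hpos _ (exp_pos t)).ne', log_pow, log_exp]
  push_cast
  ring

theorem tendsto_mul_sqrt_atTop (hlim : Tendsto (fun x => x ^ 2 * f x) atTop atTop) :
    Tendsto (fun x => x * √(f x)) atTop atTop := by
  refine (tendsto_sqrt_atTop.comp hlim).congr' ?_
  filter_upwards [eventually_ge_atTop 0] with x hx
  rw [Function.comp_apply, sqrt_mul (sq_nonneg x), sqrt_sq hx]

theorem le_exp_mul_of_centralDiff_logProfile_le (hpos : ∀ x ∈ Ioi (0 : ℝ), 0 < f x)
    {a c t : ℝ} (h : centralDiff (logProfile f) a t ≤ c) :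
    f (exp (t - a)) ≤ exp c * f (exp (t + a)) :=
  calc f (exp (t - a)) ≤ exp (c + log (f (exp (t + a)))) :=
        (log_le_iff_le_exp (hpos _ (exp_pos _))).1 (by
          simp only [centralDiff, logProfile] at h
          linarith)
    _ = exp c * f (exp (t + a)) := by rw [exp_add, exp_log (hpos _ (exp_pos _))]

theorem ratio_exp_sub_mem_Icc (hpos : ∀ x ∈ Ioi (0 : ℝ), 0 < f x)
    (hanti : ∀ x y : ℝ, 0 < x → x ≤ y → f y ≤ f x) {a c t : ℝ} (ha : 0 ≤ a)
    (h : centralDiff (logProfile f) a t ≤ c) :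
    f (exp (t - a)) / f (exp t) ∈ Icc 1 (exp c) := by
  have hft := hpos _ (exp_pos t)
  rw [mem_Icc, one_le_div hft, div_le_iff₀ hft]
  refine ⟨hanti _ _ (exp_pos _) (exp_le_exp.2 (by linarith)), ?_⟩
  exact (le_exp_mul_of_centralDiff_logProfile_le hpos h).trans <|
    mul_le_mul_of_nonneg_left (hanti _ _ (exp_pos t) (exp_le_exp.2 (by linarith))) (exp_pos c).le

theorem ratio_mem_Icc_of_le_exp_add (hpos : ∀ x ∈ Ioi (0 : ℝ), 0 < f x)
    (hanti : ∀ x y : ℝ, 0 < x → x ≤ y → f y ≤ f x) {a c t y : ℝ} (ha : 0 ≤ a)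
    (h : centralDiff (logProfile f) a t ≤ c) (hy : exp t ≤ y) (hy' : y ≤ exp (t + a)) :
    f y / f (exp t) ∈ Icc (exp (-c)) 1 := by
  have hft := hpos _ (exp_pos t)
  rw [mem_Icc, le_div_iff₀ hft, div_le_one hft, exp_neg, inv_mul_le_iff₀ (exp_pos c)]
  refine ⟨?_, hanti _ _ (exp_pos t) hy⟩
  calc f (exp t) ≤ f (exp (t - a)) := hanti _ _ (exp_pos _) (exp_le_exp.2 (by linarith))
    _ ≤ exp c * f (exp (t + a)) := le_exp_mul_of_centralDiff_logProfile_le hpos h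
    _ ≤ exp c * f y :=
        mul_le_mul_of_nonneg_left (hanti _ _ ((exp_pos t).trans_le hy) hy') (exp_pos c).le

end LogProfile

noncomputable def scaleRadius (m : ℕ) : ℝ := (1 / 8) ^ (m + 1)

noncomputable def scaleTolerance (m : ℕ) : ℝ := (1 / 4) ^ m

noncomputable def scaleEpsilon (m : ℕ) : ℝ := 1 - exp (-scaleRadius m)

theorem scaleRadius_pos (m : ℕ) : 0 < scaleRadius m := by unfold scaleRadius; positivity

theorem scaleRadius_le_one (m : ℕ) : scaleRadius m ≤ 1 :=
  pow_le_one₀ (by norm_num) (by norm_num)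

theorem scaleRadius_antitone : Antitone scaleRadius := fun _ _ h =>
  pow_le_pow_of_le_one (by norm_num) (by norm_num) (by omega)

theorem tendsto_scaleRadius : Tendsto scaleRadius atTop (𝓝 0) :=
  (tendsto_pow_atTop_nhds_zero_of_lt_one (by norm_num) (by norm_num)).comp
    (tendsto_add_atTop_nat 1)

theorem scaleTolerance_pos (m : ℕ) : 0 < scaleTolerance m := by unfold scaleTolerance; positivity

theorem tendsto_scaleTolerance : Tendsto scaleTolerance atTop (𝓝 0) :=
  tendsto_pow_atTop_nhds_zero_of_lt_one (by norm_num) (by norm_num)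

theorem sum_two_mul_scaleRadius_div_le (M : ℕ) :
    ∑ m ∈ Finset.range M, 2 * scaleRadius m / scaleTolerance m ≤ 1 / 2 := by
  have hterm : ∀ m, 2 * scaleRadius m / scaleTolerance m = 1 / 4 * (1 / 2) ^ m := fun m => by
    rw [scaleRadius, scaleTolerance, div_eq_iff (by positivity), mul_assoc, ← mul_pow, pow_succ]
    ring
  simp only [hterm, ← Finset.mul_sum]
  linarith [sum_geometric_two_le M]

theorem scaleEpsilon_pos (m : ℕ) : 0 < scaleEpsilon m :=
  sub_pos.2 (exp_lt_one_iff.2 (neg_lt_zero.2 (scaleRadius_pos m)))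

theorem scaleEpsilon_antitone : Antitone scaleEpsilon := fun _ _ h =>
  sub_le_sub_left (exp_le_exp.2 (neg_le_neg (scaleRadius_antitone h))) 1

theorem tendsto_scaleEpsilon : Tendsto scaleEpsilon atTop (𝓝 0) := by
  have h := (tendsto_const_nhds (x := (1 : ℝ))).sub tendsto_scaleRadius.neg.rexp
  rwa [neg_zero, exp_zero, sub_self] at h

theorem exp_sub_scaleEpsilon_mul (m : ℕ) (t : ℝ) :
    exp t - scaleEpsilon m * exp t = exp (t - scaleRadius m) := by
  rw [scaleEpsilon, sub_eq_add_neg t, exp_add]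
  ring

theorem exp_add_scaleEpsilon_mul_le (m : ℕ) (t : ℝ) :
    exp t + scaleEpsilon m * exp t ≤ exp (t + scaleRadius m) := by
  rw [exp_add, scaleEpsilon]
  have h : 2 - exp (-scaleRadius m) ≤ exp (scaleRadius m) := by
    linarith [add_one_le_exp (scaleRadius m), add_one_le_exp (-scaleRadius m)]
  nlinarith [exp_pos t]

section GoodSequence

variable {f : ℝ → ℝ} {t : ℕ → ℝ}

theorem tendsto_ratio_exp_sub_scaleEpsilon_mul (hpos : ∀ x ∈ Ioi (0 : ℝ), 0 < f x)
    (hanti : ∀ x y : ℝ, 0 < x → x ≤ y → f y ≤ f x)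
    (ht : ∀ k, centralDiff (logProfile f) (scaleRadius k) (t k) < scaleTolerance k) :
    Tendsto (fun k => f (exp (t k) - scaleEpsilon k * exp (t k)) / f (exp (t k))) atTop (𝓝 1) := by
  have hbound k := ratio_exp_sub_mem_Icc hpos hanti (scaleRadius_pos k).le (ht k).le
  have hupper : Tendsto (fun k => exp (scaleTolerance k)) atTop (𝓝 1) := by
    simpa using tendsto_scaleTolerance.rexp
  simp only [exp_sub_scaleEpsilon_mul]
  exact tendsto_of_tendsto_of_tendsto_of_le_of_le tendsto_const_nhds hupper
    (fun k => (hbound k).1) fun k => (hbound k).2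

theorem tendsto_liminf_ratio_exp_add_scaleEpsilon_mul (hpos : ∀ x ∈ Ioi (0 : ℝ), 0 < f x)
    (hanti : ∀ x y : ℝ, 0 < x → x ≤ y → f y ≤ f x)
    (ht : ∀ k, ∀ m ≤ k, centralDiff (logProfile f) (scaleRadius m) (t k) < scaleTolerance m) :
    Tendsto (fun n => liminf (fun k => f (exp (t k) + scaleEpsilon n * exp (t k)) / f (exp (t k)))
      atTop) atTop (𝓝 1) := by
  have hbound n := liminf_mem_Icc_of_eventually_mem <| eventually_atTop.2 ⟨n, fun k hk =>
    ratio_mem_Icc_of_le_exp_add hpos hanti (scaleRadius_pos n).le (ht k n hk).le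
      (le_add_of_nonneg_right (mul_nonneg (scaleEpsilon_pos n).le (exp_pos _).le))
      (exp_add_scaleEpsilon_mul_le n (t k))⟩
  have hlower : Tendsto (fun n => exp (-scaleTolerance n)) atTop (𝓝 1) := by
    simpa using tendsto_scaleTolerance.neg.rexp
  exact tendsto_of_tendsto_of_tendsto_of_le_of_le hlower tendsto_const_nhds
    (fun n => (hbound n).1) fun n => (hbound n).2

end GoodSequence

/-- Let `f : (0,∞) → (0,∞)` be non-increasing with `x² f(x) → ∞`. Then there exist
sequences `εₙ ↓ 0` and `x_k ↑ ∞` such that (i) `ε_k x_k √(f(x_k)) → ∞`,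
(ii) `limsup_k f(x_k - ε_k x_k)/f(x_k) = 1`, and
(iii) `limₙ liminf_k f(x_k + εₙ x_k)/f(x_k) = 1`. -/
theorem exists_good_sequences
    (f : ℝ → ℝ)
    (hpos : ∀ x ∈ Set.Ioi (0:ℝ), 0 < f x)
    (hanti : ∀ x y : ℝ, 0 < x → x ≤ y → f y ≤ f x)
    (hlim : Tendsto (fun x => x ^ 2 * f x) atTop atTop) :
    ∃ ε : ℕ → ℝ, ∃ X : ℕ → ℝ,
      (∀ n, 0 < ε n) ∧ Antitone ε ∧ Tendsto ε atTop (nhds 0) ∧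
      (∀ k, 0 < X k) ∧ Monotone X ∧ Tendsto X atTop atTop ∧
      Tendsto (fun k => ε k * X k * Real.sqrt (f (X k))) atTop atTop ∧
      Filter.limsup (fun k => f (X k - ε k * X k) / f (X k)) atTop = 1 ∧
      Tendsto (fun n => Filter.liminf (fun k => f (X k + ε n * X k) / f (X k)) atTop)
        atTop (nhds 1) := by
  have hgood := (logProfile_monotone hpos hanti).frequently_forall_centralDiff_lt
    (tendsto_two_mul_sub_logProfile hpos hlim) (fun m => (scaleRadius_pos m).le)
    scaleRadius_le_one scaleTolerance_pos sum_two_mul_scaleRadius_div_le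
  have hlarge (k : ℕ) :
      ∀ᶠ t in atTop, (k : ℝ) ≤ t ∧ (k : ℝ) ≤ scaleEpsilon k * exp t * √(f (exp t)) := by
    have h := ((tendsto_mul_sqrt_atTop hlim).comp tendsto_exp_atTop).const_mul_atTop
      (scaleEpsilon_pos k)
    simp only [Function.comp_def, ← mul_assoc] at h
    exact (eventually_ge_atTop _).and (h.eventually_ge_atTop _)
  obtain ⟨t, ht_mono, ht⟩ := exists_monotone_forall_of_frequently fun k =>
    (hgood (k + 1)).and_eventually (hlarge k)
  refine ⟨scaleEpsilon, fun k => exp (t k), scaleEpsilon_pos, scaleEpsilon_antitone,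
    tendsto_scaleEpsilon, fun k => exp_pos _, fun _ _ h => exp_le_exp.2 (ht_mono h),
    tendsto_exp_atTop.comp (tendsto_atTop_mono (fun k => (ht k).2.1) tendsto_natCast_atTop_atTop),
    tendsto_atTop_mono (fun k => (ht k).2.2) tendsto_natCast_atTop_atTop,
    (tendsto_ratio_exp_sub_scaleEpsilon_mul hpos hanti fun k =>
      (ht k).1 k k.lt_succ_self).limsup_eq,
    tendsto_liminf_ratio_exp_add_scaleEpsilon_mul hpos hanti fun k m hm =>
      (ht k).1 m (Nat.lt_succ_of_le hm)⟩
end
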